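/- arXiv:2310.13534 — 4 statements merged into one kernel-verified Lean document; each statement's English description precedes it below -/
import Mathlib

section
/- Let λ_0, …, λ_s be distinct complex numbers with Re(λ_v) > −1/2, let r_0, …, r_s ≥ 1 be integers with Σ_{v=0}^s r_v = n+1, and let Λ_n be the sequence consisting of r_0 copies of λ_0, followed by r_1 copies of λ_1, …, followed by r_s copies of λ_s. For m = 0, …, n let L_m be the Müntz–Legendre polynomial associated with the first m+1 terms of Λ_n. Then, as complex-valued functions on (0,1], span_ℂ{L_0, L_1, …, L_n} = span_ℂ{ x^{λ_v} (log x)^j : 0 ≤ v ≤ s, 0 ≤ j ≤ r_v − 1 }. -/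
open MeasureTheory Complex

noncomputable def muntzW (lam : ℕ → ℂ) (n : ℕ) (t : ℂ) : ℂ :=
  (∏ k ∈ Finset.range n, (t + (starRingEnd ℂ) (lam k) + 1) / (t - lam k)) * (1 / (t - lam n))

/-- The Müntz–Legendre polynomial `L_n(x) = (1/(2πi)) ∮_{|t|=R} W_n(t) x^t dt`,
with the radius `R = 1 + ∑_{k ≤ n} |λ_k| > max_k |λ_k|`. -/
noncomputable def muntzLegendre (lam : ℕ → ℂ) (n : ℕ) (x : ℝ) : ℂ :=
  (2 * Real.pi * Complex.I)⁻¹ *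
    ∮ t in C(0, 1 + ∑ k ∈ Finset.range (n + 1), ‖lam k‖),
      muntzW lam n t * Complex.exp (t * Real.log x)

namespace MuntzAux

open Finset Polynomial

lemma circleIntegral_finsetSum {ι : Type*} (s : Finset ι) (f : ι → ℂ → ℂ) (c : ℂ) (R : ℝ)
    (h : ∀ i ∈ s, CircleIntegrable (f i) c R) :
    (∮ z in C(c, R), ∑ i ∈ s, f i z) = ∑ i ∈ s, ∮ z in C(c, R), f i z := by
  simp only [circleIntegral, smul_sum]
  exact intervalIntegral.integral_finset_sum (μ := volume) (fun i hi => (h i hi).out)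

lemma ne_on_sphere {R : ℝ} {μ t : ℂ} (hμ : ‖μ‖ < R)
    (ht : t ∈ Metric.sphere (0 : ℂ) R) : t ≠ μ := by
  rw [mem_sphere_zero_iff_norm] at ht
  intro hc; subst hc
  linarith

lemma contOn_zpow_exp {R : ℝ} {μ L : ℂ} (hμ : ‖μ‖ < R) (z : ℤ) :
    ContinuousOn (fun t : ℂ => (t - μ) ^ z * Complex.exp (t * L)) (Metric.sphere 0 R) := by
  refine ContinuousOn.mul ?_ (Continuous.continuousOn (by fun_prop))
  exact ContinuousOn.zpow₀ (by fun_prop) z fun t ht =>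
    Or.inl (sub_ne_zero.2 (ne_on_sphere hμ ht))

lemma circleIntegrable_cmul {f : ℂ → ℂ} {c : ℂ} {R : ℝ} (a : ℂ)
    (hf : CircleIntegrable f c R) : CircleIntegrable (fun z => a * f z) c R :=
  IntervalIntegrable.const_mul hf a

lemma circleIntegral_add {f g : ℂ → ℂ} {c : ℂ} {R : ℝ} (hf : CircleIntegrable f c R)
    (hg : CircleIntegrable g c R) :
    (∮ z in C(c, R), (f z + g z)) = (∮ z in C(c, R), f z) + ∮ z in C(c, R), g z := by
  simp only [circleIntegral, smul_add]
  exact intervalIntegral.integral_add hf.out hg.out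

lemma circleIntegral_pole {R : ℝ} (hR : 0 < R) {μ : ℂ} (hμ : ‖μ‖ < R) (L : ℂ) (k : ℕ) :
    (∮ t in C(0, R), (t - μ) ^ (-(k + 1) : ℤ) * Complex.exp (t * L)) =
      (2 * Real.pi * Complex.I) * Complex.exp (μ * L) * L ^ k / (k.factorial : ℂ) := by
  induction k with
  | zero =>
    have hd : DifferentiableOn ℂ (fun t : ℂ => Complex.exp (t * L)) (Metric.closedBall 0 R) :=
      (Differentiable.differentiableOn (by fun_prop))
    have hμb : μ ∈ Metric.ball (0 : ℂ) R := by
      simpa [Metric.mem_ball, Complex.dist_eq] using hμ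
    have := hd.circleIntegral_sub_inv_smul hμb
    simp only [smul_eq_mul] at this
    have hcong : (∮ t in C(0, R), (t - μ) ^ (-((0:ℕ) + 1) : ℤ) * Complex.exp (t * L)) =
        (∮ z in C(0, R), (z - μ)⁻¹ * Complex.exp (z * L)) := by
      refine circleIntegral.integral_congr hR.le fun t _ => ?_
      norm_num
    rw [hcong, this]
    simp
  | succ k ih =>
    -- integral of a derivative over the circle is zero
    have key : (∮ t in C(0, R),
        ((-(k + 1) : ℤ) * (t - μ) ^ (-(k + 1) - 1 : ℤ) * Complex.exp (t * L)
          + (t - μ) ^ (-(k + 1) : ℤ) * (Complex.exp (t * L) * L))) = 0 := by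
      refine circleIntegral.integral_eq_zero_of_hasDerivWithinAt
        (f := fun t : ℂ => (t - μ) ^ (-(k + 1) : ℤ) * Complex.exp (t * L)) hR.le fun t ht => ?_
      have htμ : t - μ ≠ 0 := sub_ne_zero.2 (ne_on_sphere hμ ht)
      have h1 : HasDerivAt (fun t : ℂ => (t - μ) ^ (-(k + 1) : ℤ))
          ((-(k + 1) : ℤ) * (t - μ) ^ (-(k + 1) - 1 : ℤ)) t := by
        have hsub : HasDerivAt (fun t : ℂ => t - μ) 1 t := (hasDerivAt_id t).sub_const μ
        have := HasDerivAt.comp (𝕜 := ℂ) t (hasDerivAt_zpow (-(k + 1) : ℤ) (t - μ) (Or.inl htμ)) hsub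
        simpa [Function.comp_def] using this
      have h2 : HasDerivAt (fun t : ℂ => Complex.exp (t * L)) (Complex.exp (t * L) * L) t := by
        simpa using ((hasDerivAt_id t).mul_const L).cexp
      exact ((h1.mul h2)).hasDerivWithinAt
    have hInt1 : CircleIntegrable
        (fun t : ℂ => (t - μ) ^ (-(k + 1) - 1 : ℤ) * Complex.exp (t * L)) 0 R :=
      (contOn_zpow_exp hμ _).circleIntegrable hR.le
    have hInt2 : CircleIntegrable
        (fun t : ℂ => (t - μ) ^ (-(k + 1) : ℤ) * Complex.exp (t * L)) 0 R :=
      (contOn_zpow_exp hμ _).circleIntegrable hR.le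
    have split : (∮ t in C(0, R),
        ((-(k + 1) : ℤ) * (t - μ) ^ (-(k + 1) - 1 : ℤ) * Complex.exp (t * L)
          + (t - μ) ^ (-(k + 1) : ℤ) * (Complex.exp (t * L) * L))) =
        (-(k + 1) : ℤ) * (∮ t in C(0, R), (t - μ) ^ (-(k + 1) - 1 : ℤ) * Complex.exp (t * L))
          + L * (∮ t in C(0, R), (t - μ) ^ (-(k + 1) : ℤ) * Complex.exp (t * L)) := by
      rw [← circleIntegral.integral_const_mul, ← circleIntegral.integral_const_mul,
        ← circleIntegral_add (circleIntegrable_cmul _ hInt1) ((circleIntegrable_cmul _ hInt2))]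
      refine circleIntegral.integral_congr hR.le fun t ht => ?_
      ring
    rw [split] at key
    have hexp : (-(k + 1) - 1 : ℤ) = (-(↑(k + 1) + 1) : ℤ) := by push_cast; ring
    rw [hexp] at key
    have hk1 : ((k : ℂ) + 1) ≠ 0 := by
      exact Nat.cast_add_one_ne_zero k
    have : (∮ t in C(0, R), (t - μ) ^ (-(↑(k + 1) + 1) : ℤ) * Complex.exp (t * L)) =
        L * (∮ t in C(0, R), (t - μ) ^ (-(k + 1) : ℤ) * Complex.exp (t * L)) / ((k : ℂ) + 1) := by
      have hc : (((-(k + 1) : ℤ)) : ℂ) = -((k : ℂ) + 1) := by push_cast; ring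
      rw [eq_div_iff hk1]
      rw [hc] at key
      linear_combination -key
    rw [this, ih]
    rw [Nat.factorial_succ]
    push_cast
    have h2 : (k.factorial : ℂ) ≠ 0 := by exact_mod_cast Nat.factorial_ne_zero k
    field_simp
    ring


lemma span_triangle {V : Type*} [AddCommGroup V] [Module ℂ V] {N : ℕ} (L G : Fin N → V)
    (h : ∀ i, ∃ c : ℂ, c ≠ 0 ∧ L i - c • G i ∈ Submodule.span ℂ (G '' {k | k < i})) :
    Submodule.span ℂ (Set.range L) = Submodule.span ℂ (Set.range G) := by
  have hG : ∀ m : ℕ, ∀ i : Fin N, (i : ℕ) = m → G i ∈ Submodule.span ℂ (Set.range L) := by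
    intro m
    induction m using Nat.strong_induction_on with
    | _ m ih =>
      intro i him
      obtain ⟨c, hc, hmem⟩ := h i
      have h2 : L i - c • G i ∈ Submodule.span ℂ (Set.range L) := by
        refine Submodule.span_le.2 ?_ hmem
        rintro _ ⟨k, hk, rfl⟩
        exact ih (k : ℕ) (him ▸ hk) k rfl
      have h3 : c • G i ∈ Submodule.span ℂ (Set.range L) := by
        have := Submodule.sub_mem _ (Submodule.subset_span (Set.mem_range_self i)) h2
        simpa using this
      have := Submodule.smul_mem _ c⁻¹ h3
      rwa [smul_smul, inv_mul_cancel₀ hc, one_smul] at this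
  apply le_antisymm
  · refine Submodule.span_le.2 ?_
    rintro _ ⟨i, rfl⟩
    obtain ⟨c, hc, hmem⟩ := h i
    have h1 : c • G i ∈ Submodule.span ℂ (Set.range G) :=
      Submodule.smul_mem _ _ (Submodule.subset_span (Set.mem_range_self i))
    have h2 : L i - c • G i ∈ Submodule.span ℂ (Set.range G) := by
      refine Submodule.span_le.2 ?_ hmem
      rintro _ ⟨k, _, rfl⟩
      exact Submodule.subset_span (Set.mem_range_self k)
    have := Submodule.add_mem _ h1 h2
    simpa using this
  · exact Submodule.span_le.2 (by rintro _ ⟨i, rfl⟩; exact hG (i : ℕ) i rfl)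

lemma sum_div_mul_prod {F : Type*} [Field F] {ι : Type*} [DecidableEq ι] (s : Finset ι)
    (a b : ι → F) (hb : ∀ i ∈ s, b i ≠ 0) :
    (∑ i ∈ s, a i / b i) * ∏ i ∈ s, b i = ∑ i ∈ s, a i * ∏ j ∈ s.erase i, b j := by
  rw [Finset.sum_mul]
  refine Finset.sum_congr rfl fun i hi => ?_
  rw [← Finset.mul_prod_erase s b hi]
  field_simp [hb i hi]

/-- Partial fraction decomposition, polynomial-identity form. -/
lemma partial_fractions {ι : Type*} [Fintype ι] [DecidableEq ι] (N : ℂ[X]) (g : ι → ℂ[X])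
    (hg : ∀ i, (g i).Monic)
    (hcop : Set.Pairwise (Finset.univ : Finset ι) fun i j => IsCoprime (g i) (g j)) :
    ∃ (q : ℂ[X]) (rr : ι → ℂ[X]), (∀ i, (rr i).degree < (g i).degree) ∧
      N = q * ∏ i, g i + ∑ i, rr i * ∏ j ∈ Finset.univ.erase i, g j := by
  obtain ⟨q, rr, hdeg, hK⟩ := div_prod_eq_quo_add_sum_rem_div (K := RatFunc ℂ) N
      (g := g) (s := Finset.univ) (fun i _ => hg i) hcop
  refine ⟨q, rr, fun i => hdeg i (Finset.mem_univ i), ?_⟩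
  set φ := algebraMap ℂ[X] (RatFunc ℂ) with hφ
  have hinj : Function.Injective φ := IsFractionRing.injective _ _
  have hgK : ∀ i : ι, φ (g i) ≠ 0 := fun i =>
    (map_ne_zero_iff _ hinj).2 (hg i).ne_zero
  have hprod : (∏ i, φ (g i)) ≠ 0 := Finset.prod_ne_zero_iff.2 fun i _ => hgK i
  have hK' : φ N / ∏ i, φ (g i) = φ q + ∑ i, φ (rr i) / φ (g i) := hK
  rw [div_eq_iff hprod] at hK'
  apply hinj
  rw [map_add, map_mul, map_prod, map_sum]
  simp only [map_mul, map_prod]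
  rw [hK', add_mul, sum_div_mul_prod _ _ _ (fun i _ => hgK i)]


lemma decomp (s m : ℕ) (lam : ℕ → ℂ) (μ : Fin (s + 1) → ℂ) (hinj : Function.Injective μ)
    (hre : ∀ v, (μ v).re > -(1/2)) (hcov : ∀ k, k ≤ m → ∃ v, lam k = μ v) :
    ∃ c : Fin (s + 1) → ℕ → ℂ,
      (∀ v, (((Finset.range (m + 1)).filter (fun k => lam k = μ v)).card ≠ 0 →
        c v ((((Finset.range (m + 1)).filter (fun k => lam k = μ v)).card) - 1) ≠ 0)) ∧
      ∀ x : ℝ, muntzLegendre lam m x =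
        ∑ v, ∑ k ∈ Finset.range (((Finset.range (m + 1)).filter (fun k => lam k = μ v)).card),
          c v k * (Complex.exp (μ v * Real.log x) * (Real.log x : ℂ) ^ k) := by
  classical
  set e : Fin (s + 1) → ℕ :=
    fun v => ((Finset.range (m + 1)).filter (fun k => lam k = μ v)).card with he
  -- block function
  have hblk' : ∀ k : ℕ, ∃ v : Fin (s + 1), k ≤ m → lam k = μ v := by
    intro k
    by_cases h : k ≤ m
    · obtain ⟨v, hv⟩ := hcov k h; exact ⟨v, fun _ => hv⟩
    · exact ⟨0, fun h' => absurd h' h⟩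
  choose blk hblkspec using hblk'
  -- polynomials
  set NP : ℂ[X] := ∏ k ∈ Finset.range m, (X + C ((starRingEnd ℂ) (lam k) + 1)) with hNP
  set g : Fin (s + 1) → ℂ[X] := fun v => (X - C (μ v)) ^ (e v) with hgdef
  have hmon : ∀ v, (g v).Monic := fun v => (monic_X_sub_C (μ v)).pow _
  have hcop : Set.Pairwise (Finset.univ : Finset (Fin (s + 1)))
      fun i j => IsCoprime (g i) (g j) := by
    intro i _ j _ hij
    exact ((Polynomial.pairwise_coprime_X_sub_C hinj) hij).pow
  obtain ⟨q, rr, hdeg, hPid⟩ := partial_fractions NP g hmon hcop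
  have hdegg : ∀ v, (g v).degree = (e v : WithBot ℕ) := by
    intro v
    rw [hgdef]
    simp [Polynomial.degree_pow, Polynomial.degree_X_sub_C]
  -- values of μ v that occur
  have hμval : ∀ v, e v ≠ 0 → ∃ k ≤ m, lam k = μ v := by
    intro v hv
    rw [he] at hv
    obtain ⟨k, hk⟩ := Finset.card_ne_zero.1 hv
    simp only [Finset.mem_filter, Finset.mem_range] at hk
    exact ⟨k, by omega, hk.2⟩
  -- taylor coefficients
  set b : Fin (s + 1) → ℕ → ℂ := fun v j => ((Polynomial.taylor (μ v) (rr v)).coeff j) with hb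
  have hrrev : ∀ v (t : ℂ),
      (rr v).eval t = ∑ j ∈ Finset.range (e v), b v j * (t - μ v) ^ j := by
    intro v t
    by_cases h0 : rr v = 0
    · simp [h0, hb]
    · have hnd : (rr v).natDegree < e v := by
        have h1 := hdeg v
        rw [hdegg v] at h1
        exact (Polynomial.natDegree_lt_iff_degree_lt h0).2 h1
      conv_lhs => rw [← Polynomial.sum_taylor_eq (rr v) (μ v)]
      rw [Polynomial.sum_over_range' _ (by simp) (e v) (by rwa [Polynomial.natDegree_taylor])]
      rw [Polynomial.eval_finset_sum]
      simp [hb]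
  -- N doesn't vanish at the μ v
  have hNev : ∀ v, NP.eval (μ v) ≠ 0 := by
    intro v
    rw [hNP, Polynomial.eval_prod]
    refine Finset.prod_ne_zero_iff.2 fun k hk => ?_
    simp only [eval_add, eval_X, eval_C]
    obtain ⟨w, hw⟩ := hcov k (Finset.mem_range.1 hk).le
    intro hzero
    have hrepart := congrArg Complex.re hzero
    simp only [Complex.add_re, Complex.one_re, Complex.zero_re] at hrepart
    rw [hw] at hrepart
    have h1 := hre v
    have h2 := hre w
    rw [Complex.conj_re] at hrepart
    norm_num at h1 h2
    linarith
  -- top coefficient of rr v at μ v is nonzero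
  have hrrtop : ∀ v, e v ≠ 0 → (rr v).eval (μ v) ≠ 0 := by
    intro v hv
    have hEv := congrArg (Polynomial.eval (μ v)) hPid
    simp only [eval_add, eval_mul, Polynomial.eval_prod, Polynomial.eval_finset_sum] at hEv
    have hgv0 : (g v).eval (μ v) = 0 := by
      rw [hgdef]
      simp [zero_pow hv]
    have h1 : ∏ w, (g w).eval (μ v) = 0 :=
      Finset.prod_eq_zero (Finset.mem_univ v) hgv0
    have h2 : ∀ w, w ≠ v →
        (rr w).eval (μ v) * ∏ u ∈ Finset.univ.erase w, (g u).eval (μ v) = 0 := by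
      intro w hw
      have hvmem : v ∈ Finset.univ.erase w :=
        Finset.mem_erase.2 ⟨Ne.symm hw, Finset.mem_univ v⟩
      rw [Finset.prod_eq_zero hvmem hgv0, mul_zero]
    have h3 : ∑ w, (rr w).eval (μ v) * ∏ u ∈ Finset.univ.erase w, (g u).eval (μ v) =
        (rr v).eval (μ v) * ∏ u ∈ Finset.univ.erase v, (g u).eval (μ v) :=
      Finset.sum_eq_single_of_mem v (Finset.mem_univ v) (fun w _ hw => h2 w hw)
    rw [h1, mul_zero, zero_add, h3] at hEv
    intro hc
    exact hNev v (by rw [hEv, hc, zero_mul])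
  -- the coefficients
  refine ⟨fun v k => b v (e v - 1 - k) / ((Nat.factorial k : ℕ) : ℂ), ?_, ?_⟩
  · intro v hv
    show b v (e v - 1 - (e v - 1)) / ((Nat.factorial (e v - 1) : ℕ) : ℂ) ≠ 0
    rw [Nat.sub_self]
    refine div_ne_zero ?_ (by exact_mod_cast Nat.factorial_ne_zero _)
    show ((Polynomial.taylor (μ v)) (rr v)).coeff 0 ≠ 0
    rw [Polynomial.taylor_coeff_zero]
    exact hrrtop v hv
  · intro x
    set Lx : ℂ := ((Real.log x : ℝ) : ℂ) with hLx
    set R : ℝ := 1 + ∑ k ∈ Finset.range (m + 1), ‖lam k‖ with hRdef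
    have hR0 : 0 < R := by
      rw [hRdef]
      have : (0:ℝ) ≤ ∑ k ∈ Finset.range (m + 1), ‖lam k‖ :=
        Finset.sum_nonneg fun k _ => norm_nonneg _
      linarith
    have hlamR : ∀ k ≤ m, ‖lam k‖ < R := by
      intro k hk
      have h1 : ‖lam k‖ ≤ ∑ j ∈ Finset.range (m + 1), ‖lam j‖ :=
        Finset.single_le_sum (f := fun j => ‖lam j‖)
          (fun i _ => norm_nonneg _) (Finset.mem_range.2 (by omega))
      rw [hRdef]; linarith
    have hμR : ∀ v, e v ≠ 0 → ‖μ v‖ < R := by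
      intro v hv
      obtain ⟨k, hk, hkv⟩ := hμval v hv
      rw [← hkv]; exact hlamR k hk
    -- pointwise integrand identity on the sphere
    have hint : ∀ t ∈ Metric.sphere (0:ℂ) R,
        muntzW lam m t * Complex.exp (t * Lx) =
          Polynomial.eval t q * Complex.exp (t * Lx) +
          ∑ v, ∑ j ∈ Finset.range (e v),
            b v j * ((t - μ v) ^ ((j : ℤ) - (e v : ℤ)) * Complex.exp (t * Lx)) := by
      intro t ht
      have htlam : ∀ k ≤ m, t ≠ lam k := fun k hk => ne_on_sphere (hlamR k hk) ht
      have htμ : ∀ v, e v ≠ 0 → t ≠ μ v := by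
        intro v hv
        obtain ⟨k, hk, hkv⟩ := hμval v hv
        rw [← hkv]; exact htlam k hk
      have hgtne : ∀ v, Polynomial.eval t (g v) ≠ 0 := by
        intro v
        by_cases hv : e v = 0
        · rw [hgdef]; simp [hv]
        · rw [hgdef]
          simp only [eval_pow, eval_sub, eval_X, eval_C]
          exact pow_ne_zero _ (sub_ne_zero.2 (htμ v hv))
      have hDne : (∏ v, Polynomial.eval t (g v)) ≠ 0 :=
        Finset.prod_ne_zero_iff.2 fun v _ => hgtne v
      have hDt : ∏ k ∈ Finset.range (m + 1), (t - lam k) = ∏ v, Polynomial.eval t (g v) := by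
        rw [← Finset.prod_fiberwise_of_maps_to (g := fun k => blk k) (t := Finset.univ)
          (fun k _ => Finset.mem_univ _) (fun k => (t - lam k))]
        refine Finset.prod_congr rfl fun v _ => ?_
        have hfil : (Finset.range (m + 1)).filter (fun k => blk k = v) =
            (Finset.range (m + 1)).filter (fun k => lam k = μ v) := by
          ext k
          simp only [Finset.mem_filter, Finset.mem_range]
          constructor
          · rintro ⟨hk, rfl⟩; exact ⟨hk, hblkspec k (by omega)⟩
          · rintro ⟨hk, hlk⟩
            refine ⟨hk, hinj ?_⟩
            rw [← hblkspec k (by omega), hlk]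
        rw [hfil]
        calc ∏ k ∈ (Finset.range (m + 1)).filter (fun k => lam k = μ v), (t - lam k)
            = ∏ k ∈ (Finset.range (m + 1)).filter (fun k => lam k = μ v), (t - μ v) :=
              Finset.prod_congr rfl (fun k hk => by rw [(Finset.mem_filter.1 hk).2])
          _ = (t - μ v) ^ (e v) := by rw [Finset.prod_const]
          _ = Polynomial.eval t (g v) := by
              rw [hgdef]; simp
      have hW : muntzW lam m t =
          Polynomial.eval t q + ∑ v, Polynomial.eval t (rr v) / Polynomial.eval t (g v) := by
        have h1 : muntzW lam m t =
            Polynomial.eval t NP / ∏ k ∈ Finset.range (m + 1), (t - lam k) := by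
          rw [muntzW, Finset.prod_div_distrib, Finset.prod_range_succ,
            div_mul_div_comm, mul_one, hNP, Polynomial.eval_prod]
          simp only [eval_add, eval_X, eval_C]
          have hnum : (∏ x ∈ Finset.range m, (t + (starRingEnd ℂ) (lam x) + 1)) =
              ∏ x ∈ Finset.range m, (t + ((starRingEnd ℂ) (lam x) + 1)) :=
            Finset.prod_congr rfl fun k _ => by ring
          rw [hnum]
        rw [h1, hDt]
        have hEv := congrArg (Polynomial.eval t) hPid
        simp only [eval_add, eval_mul, Polynomial.eval_prod, Polynomial.eval_finset_sum] at hEv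
        rw [hEv]
        rw [← sum_div_mul_prod Finset.univ (fun w => Polynomial.eval t (rr w))
          (fun w => Polynomial.eval t (g w)) (fun i _ => hgtne i)]
        rw [← add_mul, mul_div_cancel_right₀ _ hDne]
      rw [hW, add_mul, Finset.sum_mul]
      congr 1
      refine Finset.sum_congr rfl fun v _ => ?_
      rw [hrrev v t, Finset.sum_div, Finset.sum_mul]
      refine Finset.sum_congr rfl fun j hj => ?_
      have hj' : j < e v := Finset.mem_range.1 hj
      have hsub : (t - μ v) ≠ 0 := sub_ne_zero.2 (htμ v (by omega))
      have hz : (t - μ v) ^ j / (t - μ v) ^ (e v) = (t - μ v) ^ ((j : ℤ) - (e v : ℤ)) := by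
        rw [← zpow_natCast (t - μ v) j, ← zpow_natCast (t - μ v) (e v), ← zpow_sub₀ hsub]
      have hgev : Polynomial.eval t (g v) = (t - μ v) ^ (e v) := by rw [hgdef]; simp
      rw [hgev, mul_div_assoc, hz]
      ring
    -- integrate
    have hML : muntzLegendre lam m x = (2 * Real.pi * Complex.I)⁻¹ *
        (∮ t in C(0, R), (Polynomial.eval t q * Complex.exp (t * Lx) +
          ∑ v, ∑ j ∈ Finset.range (e v),
            b v j * ((t - μ v) ^ ((j : ℤ) - (e v : ℤ)) * Complex.exp (t * Lx)))) := by
      rw [muntzLegendre]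
      congr 1
      exact circleIntegral.integral_congr hR0.le hint
    have hcont1 : ContinuousOn (fun t : ℂ => Polynomial.eval t q * Complex.exp (t * Lx))
        (Metric.sphere 0 R) :=
      ((q.continuous).mul (by fun_prop)).continuousOn
    have hintpc : ∀ (v : Fin (s + 1)) (j : ℕ), j < e v →
        CircleIntegrable (fun t : ℂ => b v j * ((t - μ v) ^ ((j : ℤ) - (e v : ℤ))
          * Complex.exp (t * Lx))) 0 R := by
      intro v j hj
      refine ContinuousOn.circleIntegrable hR0.le ?_
      exact continuousOn_const.mul (contOn_zpow_exp (hμR v (by omega)) _)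
    have hintv : ∀ v : Fin (s + 1), CircleIntegrable (fun t : ℂ => ∑ j ∈ Finset.range (e v),
        b v j * ((t - μ v) ^ ((j : ℤ) - (e v : ℤ)) * Complex.exp (t * Lx))) 0 R := by
      intro v
      refine ContinuousOn.circleIntegrable hR0.le ?_
      refine continuousOn_finset_sum _ fun j hj => ?_
      exact continuousOn_const.mul
        (contOn_zpow_exp (hμR v (by have := Finset.mem_range.1 hj; omega)) _)
    have hintsum : CircleIntegrable (fun t : ℂ => ∑ v, ∑ j ∈ Finset.range (e v),
        b v j * ((t - μ v) ^ ((j : ℤ) - (e v : ℤ)) * Complex.exp (t * Lx))) 0 R := by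
      refine ContinuousOn.circleIntegrable hR0.le ?_
      refine continuousOn_finset_sum _ fun v _ => ?_
      refine continuousOn_finset_sum _ fun j hj => ?_
      exact continuousOn_const.mul
        (contOn_zpow_exp (hμR v (by have := Finset.mem_range.1 hj; omega)) _)
    have hq0 : (∮ t in C(0, R), Polynomial.eval t q * Complex.exp (t * Lx)) = 0 := by
      refine Complex.circleIntegral_eq_zero_of_differentiable_on_off_countable
        (s := ∅) hR0.le Set.countable_empty ?_ ?_
      · exact ((q.continuous).mul (by fun_prop)).continuousOn
      · intro z _
        exact ((q.differentiable).mul (by fun_prop)).differentiableAt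
    have hsplit : (∮ t in C(0, R), (Polynomial.eval t q * Complex.exp (t * Lx) +
        ∑ v, ∑ j ∈ Finset.range (e v),
          b v j * ((t - μ v) ^ ((j : ℤ) - (e v : ℤ)) * Complex.exp (t * Lx)))) =
        (∮ t in C(0, R), Polynomial.eval t q * Complex.exp (t * Lx)) +
        ∑ v, ∑ j ∈ Finset.range (e v),
          (∮ t in C(0, R), b v j * ((t - μ v) ^ ((j : ℤ) - (e v : ℤ))
            * Complex.exp (t * Lx))) := by
      rw [circleIntegral_add (hcont1.circleIntegrable hR0.le) hintsum]
      congr 1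
      rw [circleIntegral_finsetSum Finset.univ _ _ _ (fun v _ => hintv v)]
      refine Finset.sum_congr rfl fun v _ => ?_
      rw [circleIntegral_finsetSum _ _ _ _ (fun j hj => hintpc v j (Finset.mem_range.1 hj))]
    have hpole : ∀ v, ∀ j ∈ Finset.range (e v),
        (∮ t in C(0, R), b v j * ((t - μ v) ^ ((j : ℤ) - (e v : ℤ))
          * Complex.exp (t * Lx))) =
        b v j * ((2 * Real.pi * Complex.I) * Complex.exp (μ v * Lx) * Lx ^ (e v - 1 - j)
          / (((e v - 1 - j).factorial : ℕ) : ℂ)) := by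
      intro v j hj
      have hj' : j < e v := Finset.mem_range.1 hj
      rw [circleIntegral.integral_const_mul]
      congr 1
      have hexp : ((j : ℤ) - (e v : ℤ)) = -(((e v - 1 - j : ℕ) : ℤ) + 1) := by
        push_cast; omega
      rw [hexp]
      exact circleIntegral_pole hR0 (hμR v (by omega)) Lx (e v - 1 - j)
    rw [hML, hsplit, hq0, zero_add, Finset.mul_sum]
    refine Finset.sum_congr rfl fun v _ => ?_
    rw [Finset.mul_sum]
    calc ∑ j ∈ Finset.range (e v), (2 * (Real.pi : ℂ) * Complex.I)⁻¹ *
          (∮ t in C(0, R), b v j * ((t - μ v) ^ ((j : ℤ) - (e v : ℤ))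
            * Complex.exp (t * Lx)))
        = ∑ j ∈ Finset.range (e v),
            (fun k => b v (e v - 1 - k) / ((Nat.factorial k : ℕ) : ℂ) *
              (Complex.exp (μ v * Lx) * Lx ^ k)) (e v - 1 - j) := by
          refine Finset.sum_congr rfl fun j hj => ?_
          have hj' : j < e v := Finset.mem_range.1 hj
          rw [hpole v j hj]
          have h2 : e v - 1 - (e v - 1 - j) = j := by omega
          show _ = b v (e v - 1 - (e v - 1 - j)) / ((Nat.factorial (e v - 1 - j) : ℕ) : ℂ) *
            (Complex.exp (μ v * Lx) * Lx ^ (e v - 1 - j))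
          rw [h2]
          have hfac : (((e v - 1 - j).factorial : ℕ) : ℂ) ≠ 0 := by
            exact_mod_cast Nat.factorial_ne_zero _
          field_simp [Complex.two_pi_I_ne_zero]
      _ = ∑ k ∈ Finset.range (e v),
            (fun k => b v (e v - 1 - k) / ((Nat.factorial k : ℕ) : ℂ) *
              (Complex.exp (μ v * Lx) * Lx ^ k)) k :=
          Finset.sum_range_reflect
            (fun k => b v (e v - 1 - k) / ((Nat.factorial k : ℕ) : ℂ) *
              (Complex.exp (μ v * Lx) * Lx ^ k)) (e v)
      _ = ∑ k ∈ Finset.range (e v), b v (e v - 1 - k) / ((Nat.factorial k : ℕ) : ℂ) *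
            (Complex.exp (μ v * Lx) * Lx ^ k) := rfl


end MuntzAux

open MuntzAux in
theorem muntzLegendre_span_repeated_indices
    (n s : ℕ) (μ : Fin (s + 1) → ℂ) (hμdist : Function.Injective μ)
    (hμre : ∀ v, (μ v).re > -(1/2))
    (r : Fin (s + 1) → ℕ) (hr : ∀ v, 1 ≤ r v) (hsum : ∑ v, r v = n + 1)
    (lam : ℕ → ℂ)
    -- `lam` consists of `r 0` copies of `μ 0`, followed by `r 1` copies of `μ 1`, etc.
    (hlam : ∀ v : Fin (s + 1), ∀ m : ℕ,
      (∑ u ∈ Finset.Iio v, r u) ≤ m → m < ∑ u ∈ Finset.Iic v, r u → lam m = μ v) :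
    Submodule.span ℂ
        (Set.range fun m : Fin (n + 1) =>
          fun x : Set.Ioc (0 : ℝ) 1 => muntzLegendre lam m x)
      =
    Submodule.span ℂ
        {f : Set.Ioc (0 : ℝ) 1 → ℂ | ∃ v : Fin (s + 1), ∃ j < r v,
          f = fun x : Set.Ioc (0 : ℝ) 1 =>
            Complex.exp (μ v * Real.log (x : ℝ)) * (Real.log (x : ℝ)) ^ j} := by
  classical
  set S : Fin (s + 1) → ℕ := fun v => ∑ u ∈ Finset.Iio v, r u with hS
  have hSr : ∀ v, S v + r v = ∑ u ∈ Finset.Iic v, r u := by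
    intro v
    rw [← Finset.Iio_insert, Finset.sum_insert (by simp)]
    ring
  have hlam' : ∀ v : Fin (s + 1), ∀ m : ℕ, S v ≤ m → m < S v + r v → lam m = μ v := by
    intro v m h1 h2
    exact hlam v m h1 (by rw [← hSr v]; exact h2)
  have hStotal : ∀ v, S v + r v ≤ n + 1 := by
    intro v
    rw [hSr v, ← hsum]
    exact Finset.sum_le_sum_of_subset (Finset.subset_univ _)
  have hdisj : ∀ v w : Fin (s + 1), ∀ m : ℕ, S v ≤ m → m < S v + r v → S w ≤ m →
      m < S w + r w → v = w := by
    have key : ∀ v w : Fin (s + 1), v < w → S v + r v ≤ S w := by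
      intro v w hvw
      rw [hSr v, hS]
      refine Finset.sum_le_sum_of_subset fun u hu => ?_
      exact Finset.mem_Iio.2 (lt_of_le_of_lt (Finset.mem_Iic.1 hu) hvw)
    intro v w m h1 h2 h3 h4
    by_contra hne
    rcases lt_or_gt_of_ne hne with h | h
    · have := key v w h; omega
    · have := key w v h; omega
  have hcover : ∀ m : ℕ, m ≤ n → ∃ v, S v ≤ m ∧ m < S v + r v := by
    intro m hm
    have hS0 : S 0 = 0 := by
      rw [hS]
      have : Finset.Iio (0 : Fin (s + 1)) = ∅ := by
        ext u; simp [Finset.mem_Iio, Fin.not_lt_zero]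
      simp [this]
    set T := Finset.univ.filter (fun v : Fin (s + 1) => S v ≤ m) with hT
    have hT0 : (0 : Fin (s + 1)) ∈ T := by simp [hT, hS0]
    have hTne : T.Nonempty := ⟨0, hT0⟩
    set v := T.max' hTne with hv
    have hv1 : S v ≤ m := (Finset.mem_filter.1 (T.max'_mem hTne)).2
    refine ⟨v, hv1, ?_⟩
    by_contra hcon
    push_neg at hcon
    by_cases hlast : (v : ℕ) < s
    · set w : Fin (s + 1) := ⟨v.val + 1, by omega⟩ with hw
      have hIio : Finset.Iio w = Finset.Iic v := by
        ext u
        simp only [Finset.mem_Iio, Finset.mem_Iic, Fin.lt_def, Fin.le_def, hw]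
        omega
      have hSw : S w = S v + r v := by
        rw [hSr v]
        show (∑ u ∈ Finset.Iio w, r u) = ∑ u ∈ Finset.Iic v, r u
        rw [hIio]
      have hwT : w ∈ T := by
        simp only [hT, Finset.mem_filter, Finset.mem_univ, true_and, hSw]
        omega
      have hle := Finset.le_max' T w hwT
      rw [← hv] at hle
      rw [Fin.le_def] at hle
      simp only [hw] at hle
      omega
    · have hveq : Finset.Iic v = Finset.univ := by
        ext u
        simp only [Finset.mem_Iic, Finset.mem_univ, iff_true, Fin.le_def]
        omega
      have : S v + r v = n + 1 := by rw [hSr v, hveq, hsum]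
      omega
  have hblkex : ∀ m : ℕ, ∃ v : Fin (s + 1), m ≤ n → (S v ≤ m ∧ m < S v + r v) := by
    intro m
    by_cases h : m ≤ n
    · obtain ⟨v, hv⟩ := hcover m h; exact ⟨v, fun _ => hv⟩
    · exact ⟨0, fun h' => absurd h' h⟩
  choose blk hblkspec using hblkex
  have hblkval : ∀ m : ℕ, m ≤ n → lam m = μ (blk m) := by
    intro m hm
    obtain ⟨h1, h2⟩ := hblkspec m hm
    exact hlam' (blk m) m h1 h2
  set fp : Fin (s + 1) → ℕ → (Set.Ioc (0 : ℝ) 1 → ℂ) := fun v j =>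
    fun x : Set.Ioc (0 : ℝ) 1 =>
      Complex.exp (μ v * Real.log (x : ℝ)) * (Real.log (x : ℝ) : ℂ) ^ j with hfp
  set G : Fin (n + 1) → (Set.Ioc (0 : ℝ) 1 → ℂ) := fun i =>
    fp (blk i) ((i : ℕ) - S (blk i)) with hG
  have hGidx : ∀ (v : Fin (s + 1)) (j : ℕ), j < r v → ∀ (hlt : S v + j < n + 1),
      blk (S v + j) = v ∧
      G ⟨S v + j, hlt⟩ = fp v j := by
    intro v j hj hlt
    have hmn : S v + j ≤ n := by omega
    obtain ⟨h1, h2⟩ := hblkspec (S v + j) hmn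
    have hbv : blk (S v + j) = v := hdisj _ _ (S v + j) h1 h2 (by omega) (by omega)
    refine ⟨hbv, ?_⟩
    show fp (blk (S v + j)) ((S v + j) - S (blk (S v + j))) = fp v j
    rw [hbv]
    have harg : S v + j - S v = j := by omega
    rw [harg]
  have hset : {f : Set.Ioc (0 : ℝ) 1 → ℂ | ∃ v : Fin (s + 1), ∃ j < r v,
      f = fun x : Set.Ioc (0 : ℝ) 1 =>
        Complex.exp (μ v * Real.log (x : ℝ)) * (Real.log (x : ℝ)) ^ j} = Set.range G := by
    ext f
    constructor
    · rintro ⟨v, j, hj, rfl⟩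
      have hlt : S v + j < n + 1 := by have := hStotal v; omega
      exact ⟨⟨S v + j, hlt⟩, (hGidx v j hj hlt).2⟩
    · rintro ⟨i, rfl⟩
      have hi : (i : ℕ) ≤ n := Nat.lt_succ_iff.1 i.isLt
      obtain ⟨h1, h2⟩ := hblkspec (i : ℕ) hi
      exact ⟨blk i, (i : ℕ) - S (blk i), by omega, rfl⟩
  rw [hset]
  refine span_triangle _ G fun i => ?_
  set m : ℕ := (i : ℕ) with hm
  have hmn : m ≤ n := Nat.lt_succ_iff.1 i.isLt
  have hcov : ∀ k, k ≤ m → ∃ v, lam k = μ v := fun k hk =>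
    ⟨blk k, hblkval k (by omega)⟩
  obtain ⟨c, hctop, hcval⟩ := decomp s m lam μ hμdist hμre hcov
  set e : Fin (s + 1) → ℕ :=
    fun v => ((Finset.range (m + 1)).filter (fun k => lam k = μ v)).card with he
  have hefilter : ∀ (v : Fin (s + 1)) (k : ℕ),
      k ∈ (Finset.range (m + 1)).filter (fun k => lam k = μ v) ↔
        (k ≤ m ∧ S v ≤ k ∧ k < S v + r v) := by
    intro v k
    simp only [Finset.mem_filter, Finset.mem_range]
    constructor
    · rintro ⟨hk, hlk⟩
      have hkn : k ≤ n := by omega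
      have hbv : blk k = v := hμdist (by rw [← hblkval k hkn, hlk])
      obtain ⟨h1, h2⟩ := hblkspec k hkn
      rw [hbv] at h1 h2
      exact ⟨by omega, h1, h2⟩
    · rintro ⟨hk, h1, h2⟩
      exact ⟨by omega, hlam' v k h1 h2⟩
  have hecard : ∀ v, e v = min (m + 1) (S v + r v) - S v := by
    intro v
    show ((Finset.range (m + 1)).filter (fun k => lam k = μ v)).card = _
    have hfe : (Finset.range (m + 1)).filter (fun k => lam k = μ v) =
        Finset.Ico (S v) (min (m + 1) (S v + r v)) := by
      ext k
      rw [hefilter v k, Finset.mem_Ico]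
      omega
    rw [hfe, Nat.card_Ico]
  have herle : ∀ v, e v ≤ r v := fun v => by rw [hecard v]; omega
  obtain ⟨hb1, hb2⟩ := hblkspec m hmn
  have hem : e (blk m) ≠ 0 ∧ S (blk m) + e (blk m) = m + 1 := by
    rw [hecard (blk m)]
    omega
  have hkeyne : ∀ v, v ≠ blk m → e v ≠ 0 → S v + e v ≤ m := by
    intro v hv hev
    rw [hecard v] at hev ⊢
    have hSvm : S v ≤ m := by omega
    by_cases hc : m < S v + r v
    · exact absurd (hdisj v (blk m) m hSvm hc hb1 hb2) hv
    · omega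
  -- the top coefficient
  refine ⟨c (blk m) (e (blk m) - 1), hctop (blk m) hem.1, ?_⟩
  -- function-level decomposition of L i
  have hLi : (fun x : Set.Ioc (0 : ℝ) 1 => muntzLegendre lam (i : ℕ) x) =
      ∑ p ∈ Finset.univ.sigma (fun v : Fin (s + 1) => Finset.range (e v)),
        c p.1 p.2 • fp p.1 p.2 := by
    funext x
    rw [Finset.sum_apply]
    simp only [Pi.smul_apply, smul_eq_mul, hfp]
    rw [Finset.sum_sigma]
    exact hcval (x : ℝ)
  have hp0mem : (⟨blk m, e (blk m) - 1⟩ : Σ _ : Fin (s + 1), ℕ) ∈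
      Finset.univ.sigma (fun v : Fin (s + 1) => Finset.range (e v)) := by
    simp only [Finset.mem_sigma, Finset.mem_univ, Finset.mem_range, true_and]
    exact Nat.sub_lt (Nat.pos_of_ne_zero hem.1) one_pos
  have hGi : G i = fp (blk m) (e (blk m) - 1) := by
    show fp (blk m) (m - S (blk m)) = fp (blk m) (e (blk m) - 1)
    have h1 := hem.1
    have h2 := hem.2
    have harg : m - S (blk m) = e (blk m) - 1 := by omega
    rw [harg]
  have hsum_split := Finset.add_sum_erase _ (fun p : Σ _ : Fin (s + 1), ℕ =>
    c p.1 p.2 • fp p.1 p.2) hp0mem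
  rw [hLi, hGi, ← hsum_split]
  rw [add_sub_cancel_left]
  refine Submodule.sum_mem _ fun p hp => ?_
  have hpne := (Finset.mem_erase.1 hp).1
  have hpmem := (Finset.mem_erase.1 hp).2
  obtain ⟨pv, pj⟩ := p
  simp only [Finset.mem_sigma, Finset.mem_univ, Finset.mem_range, true_and] at hpmem
  have hplt : S pv + pj < m := by
    by_cases hv : pv = blk m
    · have hne2 : pj ≠ e (blk m) - 1 := fun hc => hpne (by rw [hv, hc])
      have h1 := hem.2
      have h2 := hem.1
      rw [hv] at hpmem ⊢
      omega
    · have := hkeyne pv hv (by omega)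
      omega
  have hjr : pj < r pv := lt_of_lt_of_le hpmem (herle pv)
  have hlt2 : S pv + pj < n + 1 := by have := hStotal pv; omega
  obtain ⟨hbv, hGeq⟩ := hGidx pv pj hjr hlt2
  refine Submodule.smul_mem _ _ (Submodule.subset_span ?_)
  refine ⟨⟨S pv + pj, hlt2⟩, ?_, hGeq⟩
  show (⟨S pv + pj, hlt2⟩ : Fin (n + 1)) < i
  rw [Fin.lt_def]
  exact hplt
end

section
/- Let λ_0, …, λ_n be complex numbers with Re(λ_k) > −1/2 for all k (repetitions allowed), and let L_n be the associated Müntz–Legendre polynomial. Then L_n(1) = 1, L_n is differentiable on (0,1], and its derivative at x = 1 satisfies L_n′(1) = λ_n + Σ_{k=0}^{n−1} (λ_k + conj(λ_k) + 1). -/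
open MeasureTheory Complex Metric Finset

lemma keyCircle (f : ℂ → ℂ) (c : ℂ) (R₀ R₁ C : ℝ) (h0 : 0 < R₀) (h01 : R₀ ≤ R₁)
    (hd : ∀ t : ℂ, R₀ ≤ ‖t‖ → DifferentiableAt ℂ f t)
    (hb : ∀ t : ℂ, R₁ ≤ ‖t‖ → ‖f t - c / t‖ ≤ C / ‖t‖ ^ 2) :
    (∮ t in C(0, R₀), f t) = 2 * Real.pi * Complex.I * c := by
  have habs : ∀ z : ℂ, ‖z‖ = ‖z‖ := fun z => rfl
  have H : ∀ R : ℝ, R₁ ≤ R → ‖(∮ t in C(0, R₀), f t) - 2 * Real.pi * Complex.I * c‖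
      ≤ 2 * Real.pi * C / R := by
    intro R hR
    have hR0R : R₀ ≤ R := le_trans h01 hR
    have hRpos : 0 < R := lt_of_lt_of_le h0 hR0R
    -- radius independence
    have heq : (∮ t in C(0, R), f t) = ∮ t in C(0, R₀), f t := by
      apply circleIntegral_eq_of_differentiable_on_annulus_off_countable h0 hR0R
        Set.countable_empty
      · intro z hz
        have : R₀ ≤ ‖z‖ := by
          have := hz.2
          simp only [mem_ball, dist_zero_right, not_lt, habs] at this
          exact this
        exact (hd z this).continuousAt.continuousWithinAt
      · intro z hz
        have : R₀ ≤ ‖z‖ := by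
          have := hz.1.2
          simp only [mem_closedBall, dist_zero_right, not_le, habs] at this
          exact le_of_lt this
        exact hd z this
    have hsphere : ∀ z ∈ sphere (0:ℂ) R, ‖z‖ = R := by
      intro z hz
      rw [← habs]
      exact mem_sphere_zero_iff_norm.mp hz
    have hint_f : CircleIntegrable f 0 R := by
      apply ContinuousOn.circleIntegrable hRpos.le
      intro z hz
      exact (hd z (by rw [hsphere z hz]; exact hR0R)).continuousAt.continuousWithinAt
    have hint_g : CircleIntegrable (fun t : ℂ => c / t) 0 R := by
      apply ContinuousOn.circleIntegrable hRpos.le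
      intro z hz
      have hz0 : z ≠ 0 := by
        intro h; rw [h] at hz; simp at hz
        exact hRpos.ne (by simpa using hz)
      exact (continuousAt_const.div continuousAt_id hz0).continuousWithinAt
    have hdiv : (∮ t in C(0, R), c / t) = 2 * Real.pi * Complex.I * c := by
      have : (∮ t in C(0, R), c / t) = c * ∮ t in C(0, R), (t - 0)⁻¹ := by
        rw [← circleIntegral.integral_const_mul]
        congr 1; funext t; rw [sub_zero, div_eq_mul_inv]
      rw [this, circleIntegral.integral_sub_center_inv 0 hRpos.ne']
      ring
    have hsub : (∮ t in C(0, R), (f t - c / t))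
        = (∮ t in C(0, R₀), f t) - 2 * Real.pi * Complex.I * c := by
      rw [circleIntegral.integral_sub hint_f hint_g, heq, hdiv]
    rw [← hsub]
    have hbound : ∀ z ∈ sphere (0:ℂ) R, ‖f z - c / z‖ ≤ C / R ^ 2 := by
      intro z hz
      have h1 := hb z (by rw [hsphere z hz]; exact hR)
      rwa [hsphere z hz] at h1
    have := circleIntegral.norm_integral_le_of_norm_le_const hRpos.le hbound
    calc ‖∮ z in C(0, R), (f z - c / z)‖ ≤ 2 * Real.pi * R * (C / R ^ 2) := this
      _ = 2 * Real.pi * C / R := by field_simp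
  -- take R → ∞
  have hC : Filter.Tendsto (fun R : ℝ => 2 * Real.pi * C / R) Filter.atTop (nhds 0) :=
    Filter.Tendsto.div_atTop tendsto_const_nhds Filter.tendsto_id
  have hle : ‖(∮ t in C(0, R₀), f t) - 2 * Real.pi * Complex.I * c‖ ≤ 0 := by
    refine ge_of_tendsto hC ?_
    filter_upwards [Filter.eventually_ge_atTop R₁] with R hR using H R hR
  exact sub_eq_zero.mp (norm_le_zero_iff.mp hle)


lemma prodBound (a b : ℕ → ℂ) (M : ℝ) (s : Finset ℕ)
    (hM : ∑ k ∈ s, (‖a k‖ + ‖b k‖) ≤ M) :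
    ∀ t : ℂ, 2 * M + 2 ≤ ‖t‖ →
      ‖(∏ k ∈ s, (t + b k) / (t - a k)) - 1 - (∑ k ∈ s, (a k + b k)) / t‖
        ≤ (4 * M ^ 2 + 1) * 3 ^ s.card / ‖t‖ ^ 2 := by
  have hM0 : 0 ≤ M := le_trans (Finset.sum_nonneg fun k _ => by positivity) hM
  induction s using Finset.induction_on with
  | empty =>
    intro t ht
    have htpos : 0 < ‖t‖ := by linarith
    simp only [Finset.prod_empty, Finset.sum_empty, zero_div, sub_zero, sub_self, norm_zero,
      Finset.card_empty, pow_zero, mul_one]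
    positivity
  | insert j s' hj ih =>
    intro t ht
    have hsub : ∑ k ∈ s', (‖a k‖ + ‖b k‖) ≤ M := by
      refine le_trans ?_ hM
      exact Finset.sum_le_sum_of_subset_of_nonneg (Finset.subset_insert j s')
        (fun k _ _ => by positivity)
    have hjM : ‖a j‖ + ‖b j‖ ≤ M := by
      refine le_trans ?_ hM
      exact Finset.single_le_sum (f := fun k => ‖a k‖ + ‖b k‖)
        (fun k _ => by positivity) (Finset.mem_insert_self j s')
    have IH := ih hsub t ht
    have htpos : 0 < ‖t‖ := by linarith
    have ht0 : t ≠ 0 := by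
      intro h; rw [h] at htpos; simp at htpos
    -- facts about the factor
    have haj : ‖a j‖ ≤ M := by
      have := norm_nonneg (b j); linarith
    have hbj : ‖b j‖ ≤ M := by
      have := norm_nonneg (a j); linarith
    have hta : ‖t‖ / 2 ≤ ‖t - a j‖ := by
      have h1 : ‖t‖ - ‖a j‖ ≤ ‖t - a j‖ := by
        exact norm_sub_norm_le t (a j)
      linarith
    have htaj0 : t - a j ≠ 0 := by
      intro h
      rw [h] at hta
      simp only [norm_zero] at hta
      linarith
    set T := ‖t‖ with hT
    set e := a j + b j with he
    set c := ∑ k ∈ s', (a k + b k) with hc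
    set v := (t + b j) / (t - a j) with hv
    have hen : ‖e‖ ≤ M := le_trans (norm_add_le _ _) hjM
    have htapos : 0 < ‖t - a j‖ := lt_of_lt_of_le (by positivity) hta
    have hcn : ‖c‖ ≤ M := by
      refine le_trans (norm_sum_le s' _) (le_trans ?_ hsub)
      refine Finset.sum_le_sum fun k _ => ?_
      exact norm_add_le (a k) (b k)
    have hv1 : v - 1 = e / (t - a j) := by
      rw [hv, he, div_sub_one htaj0]
      ring
    have hv1n : ‖v - 1‖ ≤ 2 * M / T := by
      rw [hv1, norm_div]
      rw [div_le_div_iff₀ htapos htpos]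
      have h2 : 2 * M * (T / 2) ≤ 2 * M * ‖t - a j‖ :=
        mul_le_mul_of_nonneg_left hta (by linarith)
      have h3 : ‖e‖ * T ≤ M * T :=
        mul_le_mul_of_nonneg_right hen htpos.le
      linarith
    have hvn : ‖v‖ ≤ 2 := by
      have h1 : 2 * M / T ≤ 1 := by
        rw [div_le_one (by positivity)]; linarith
      calc ‖v‖ = ‖(v - 1) + 1‖ := by ring_nf
        _ ≤ ‖v - 1‖ + ‖(1:ℂ)‖ := norm_add_le _ _
        _ ≤ 1 + 1 := by
            rw [norm_one]
            exact add_le_add (le_trans hv1n h1) le_rfl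
        _ = 2 := by norm_num
    have hsecond : v - 1 - e / t = e * a j / ((t - a j) * t) := by
      rw [hv1]
      field_simp
      ring
    have hsecondn : ‖v - 1 - e / t‖ ≤ 2 * M ^ 2 / T ^ 2 := by
      rw [hsecond, norm_div, norm_mul, norm_mul]
      rw [div_le_div_iff₀ (by positivity) (by positivity)]
      have h3 : ‖e‖ * ‖a j‖ * T ^ 2 ≤ M * M * T ^ 2 := by
        have := mul_le_mul hen haj (norm_nonneg (a j)) hM0
        nlinarith [sq_nonneg T]
      have h4 : M * M * T ^ 2 ≤ 2 * M ^ 2 * (‖t - a j‖ * T) := by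
        have h5 : T / 2 * T ≤ ‖t - a j‖ * T :=
          mul_le_mul_of_nonneg_right hta htpos.le
        nlinarith [sq_nonneg M]
      linarith
    have hident : (∏ k ∈ insert j s', (t + b k) / (t - a k)) - 1
        - (∑ k ∈ insert j s', (a k + b k)) / t
        = v * ((∏ k ∈ s', (t + b k) / (t - a k)) - 1 - c / t)
          + (v - 1 - e / t) + (v - 1) * (c / t) := by
      rw [Finset.prod_insert hj, Finset.sum_insert hj, ← hv, ← he, ← hc]
      ring
    have hct : ‖c / t‖ ≤ M / T := by
      rw [norm_div]
      gcongr
    set D : ℝ := (4 * M ^ 2 + 1) * 3 ^ s'.card with hD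
    have hDpos : 0 < D := by positivity
    have h3c : (1:ℝ) ≤ 3 ^ s'.card := one_le_pow₀ (by norm_num)
    have hT2 : (0:ℝ) < T ^ 2 := by positivity
    have hnorm1 : ‖v * ((∏ k ∈ s', (t + b k) / (t - a k)) - 1 - c / t)‖ ≤ 2 * (D / T ^ 2) := by
      rw [norm_mul]
      exact mul_le_mul hvn IH (norm_nonneg _) (by norm_num)
    have hnorm3 : ‖(v - 1) * (c / t)‖ ≤ 2 * M / T * (M / T) := by
      rw [norm_mul]
      exact mul_le_mul hv1n hct (norm_nonneg _) (by positivity)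
    have hcard : (insert j s').card = s'.card + 1 := Finset.card_insert_of_notMem hj
    calc ‖(∏ k ∈ insert j s', (t + b k) / (t - a k)) - 1
          - (∑ k ∈ insert j s', (a k + b k)) / t‖
        = ‖v * ((∏ k ∈ s', (t + b k) / (t - a k)) - 1 - c / t)
            + (v - 1 - e / t) + (v - 1) * (c / t)‖ := by rw [hident]
      _ ≤ ‖v * ((∏ k ∈ s', (t + b k) / (t - a k)) - 1 - c / t)‖
            + ‖v - 1 - e / t‖ + ‖(v - 1) * (c / t)‖ := norm_add₃_le
      _ ≤ 2 * (D / T ^ 2) + 2 * M ^ 2 / T ^ 2 + 2 * M / T * (M / T) :=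
          add_le_add (add_le_add hnorm1 hsecondn) hnorm3
      _ = (2 * D + 4 * M ^ 2) / T ^ 2 := by field_simp; ring
      _ ≤ (4 * M ^ 2 + 1) * 3 ^ (insert j s').card / T ^ 2 := by
          rw [hcard, div_le_div_iff₀ hT2 hT2]
          have key : 2 * D + 4 * M ^ 2 ≤ (4 * M ^ 2 + 1) * 3 ^ (s'.card + 1) := by
            have hpw : (3:ℝ) ^ (s'.card + 1) = 3 * 3 ^ s'.card := by ring
            rw [hD]
            nlinarith [hpw,
              mul_le_mul_of_nonneg_left h3c (by positivity : (0:ℝ) ≤ 4 * M ^ 2 + 1)]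
          exact mul_le_mul_of_nonneg_right key (sq_nonneg T)

lemma prodBound1 (a b : ℕ → ℂ) (M : ℝ) (s : Finset ℕ)
    (hM : ∑ k ∈ s, (‖a k‖ + ‖b k‖) ≤ M) :
    ∀ t : ℂ, 2 * M + 2 ≤ ‖t‖ →
      ‖(∏ k ∈ s, (t + b k) / (t - a k)) - 1‖
        ≤ ((4 * M ^ 2 + 1) * 3 ^ s.card + M) / ‖t‖ := by
  intro t ht
  have hM0 : 0 ≤ M := le_trans (Finset.sum_nonneg fun k _ => by positivity) hM
  have htpos : 0 < ‖t‖ := by linarith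
  have htone : 1 ≤ ‖t‖ := by linarith
  have h1 := prodBound a b M s hM t ht
  have hcn : ‖∑ k ∈ s, (a k + b k)‖ ≤ M := by
    refine le_trans (norm_sum_le s _) (le_trans ?_ hM)
    refine Finset.sum_le_sum fun k _ => ?_
    exact norm_add_le (a k) (b k)
  set T := ‖t‖
  set D : ℝ := (4 * M ^ 2 + 1) * 3 ^ s.card with hD
  have hDpos : 0 < D := by positivity
  calc ‖(∏ k ∈ s, (t + b k) / (t - a k)) - 1‖
      = ‖((∏ k ∈ s, (t + b k) / (t - a k)) - 1 - (∑ k ∈ s, (a k + b k)) / t)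
          + (∑ k ∈ s, (a k + b k)) / t‖ := by congr 1; ring
    _ ≤ ‖(∏ k ∈ s, (t + b k) / (t - a k)) - 1 - (∑ k ∈ s, (a k + b k)) / t‖
          + ‖(∑ k ∈ s, (a k + b k)) / t‖ := norm_add_le _ _
    _ ≤ D / T ^ 2 + M / T := by
        refine add_le_add h1 ?_
        rw [norm_div]
        gcongr
    _ ≤ D / T + M / T := by
        have hTT : T ≤ T ^ 2 := by nlinarith
        gcongr
    _ = (D + M) / T := (add_div D M T).symm

section Main

variable (n : ℕ) (lam : ℕ → ℂ)

/-- radius -/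
noncomputable def mR (n : ℕ) (lam : ℕ → ℂ) : ℝ :=
  1 + ∑ k ∈ Finset.range (n + 1), ‖lam k‖

/-- modified numerator shifts -/
noncomputable def mb (n : ℕ) (lam : ℕ → ℂ) : ℕ → ℂ :=
  fun k => if k < n then (starRingEnd ℂ) (lam k) + 1 else 0

lemma mR_pos : 0 < mR n lam := by
  have : 0 ≤ ∑ k ∈ Finset.range (n + 1), ‖lam k‖ :=
    Finset.sum_nonneg fun k _ => norm_nonneg _
  unfold mR; linarith

lemma mR_one : 1 ≤ mR n lam := by
  have : 0 ≤ ∑ k ∈ Finset.range (n + 1), ‖lam k‖ :=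
    Finset.sum_nonneg fun k _ => norm_nonneg _
  unfold mR; linarith

lemma lam_le (k : ℕ) (hk : k ≤ n) : ‖lam k‖ + 1 ≤ mR n lam := by
  unfold mR
  have h1 : ‖lam k‖ ≤ ∑ j ∈ Finset.range (n + 1), ‖lam j‖ :=
    Finset.single_le_sum (f := fun j => ‖lam j‖)
      (fun j _ => norm_nonneg _) (Finset.mem_range.mpr (Nat.lt_succ_of_le hk))
  linarith

lemma denom_ge (t : ℂ) (ht : mR n lam ≤ ‖t‖) (k : ℕ) (hk : k ≤ n) :
    1 ≤ ‖t - lam k‖ := by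
  have h1 : ‖t‖ - ‖lam k‖ ≤ ‖t - lam k‖ := by
    exact norm_sub_norm_le t (lam k)
  have h2 := lam_le n lam k hk
  linarith

lemma denom_ne (t : ℂ) (ht : mR n lam ≤ ‖t‖) (k : ℕ) (hk : k ≤ n) :
    t - lam k ≠ 0 := by
  intro h
  have := denom_ge n lam t ht k hk
  rw [h] at this; simp at this; linarith

lemma muntzW_diff (t : ℂ) (ht : mR n lam ≤ ‖t‖) :
    DifferentiableAt ℂ (muntzW lam n) t := by
  unfold muntzW
  apply DifferentiableAt.mul
  · apply DifferentiableAt.fun_finsetProd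
    intro k hk
    have hk' : k ≤ n := le_of_lt (Finset.mem_range.mp hk)
    exact (((differentiableAt_id.add_const _).add_const _)).div
      (differentiableAt_id.sub_const _) (denom_ne n lam t ht k hk')
  · exact (differentiableAt_const _).div (differentiableAt_id.sub_const _)
      (denom_ne n lam t ht n le_rfl)

lemma muntzW_prod (t : ℂ) :
    t * muntzW lam n t = ∏ k ∈ Finset.range (n + 1), (t + mb n lam k) / (t - lam k) := by
  rw [Finset.prod_range_succ]
  have h1 : ∀ k ∈ Finset.range n, (t + mb n lam k) / (t - lam k)
      = (t + (starRingEnd ℂ) (lam k) + 1) / (t - lam k) := by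
    intro k hk
    rw [mb, if_pos (Finset.mem_range.mp hk), add_assoc]
  rw [Finset.prod_congr rfl h1, mb, if_neg (lt_irrefl n), add_zero]
  unfold muntzW
  ring


noncomputable def mM (n : ℕ) (lam : ℕ → ℂ) : ℝ :=
  ∑ k ∈ Finset.range (n + 1), (‖lam k‖ + ‖mb n lam k‖)

lemma mc_eq : ∑ k ∈ Finset.range (n + 1), (lam k + mb n lam k)
    = lam n + ∑ k ∈ Finset.range n, (lam k + (starRingEnd ℂ) (lam k) + 1) := by
  rw [Finset.sum_range_succ, mb, if_neg (lt_irrefl n), add_zero]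
  rw [Finset.sum_congr rfl (fun k hk => ?_), add_comm]
  rw [mb, if_pos (Finset.mem_range.mp hk), add_assoc]

lemma intW : (∮ t in C(0, mR n lam), muntzW lam n t) = 2 * Real.pi * Complex.I := by
  have hM0 : (0:ℝ) ≤ mM n lam := Finset.sum_nonneg fun k _ => by positivity
  have h := keyCircle (muntzW lam n) 1 (mR n lam) (max (mR n lam) (2 * mM n lam + 2))
    ((4 * mM n lam ^ 2 + 1) * 3 ^ (n + 1) + mM n lam)
    (mR_pos n lam) (le_max_left _ _) (muntzW_diff n lam) ?_
  · rw [h, mul_one]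
  intro t ht
  have htR : mR n lam ≤ ‖t‖ := le_trans (le_max_left _ _) ht
  have h2M : 2 * mM n lam + 2 ≤ ‖t‖ := le_trans (le_max_right _ _) ht
  have htpos : (0:ℝ) < ‖t‖ := lt_of_lt_of_le (mR_pos n lam) htR
  have ht0 : t ≠ 0 := by intro h; rw [h] at htpos; simp at htpos
  have hid : muntzW lam n t - 1 / t = (t * muntzW lam n t - 1) / t := by
    field_simp
  rw [hid, muntzW_prod]
  have hpb := prodBound1 lam (mb n lam) (mM n lam) (Finset.range (n + 1)) le_rfl t h2M
  rw [Finset.card_range] at hpb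
  calc ‖((∏ k ∈ Finset.range (n + 1), (t + mb n lam k) / (t - lam k)) - 1) / t‖
      = ‖(∏ k ∈ Finset.range (n + 1), (t + mb n lam k) / (t - lam k)) - 1‖
        / ‖t‖ := by simp only [norm_div]
    _ ≤ (((4 * mM n lam ^ 2 + 1) * 3 ^ (n + 1) + mM n lam) / ‖t‖)
        / ‖t‖ := by gcongr
    _ = ((4 * mM n lam ^ 2 + 1) * 3 ^ (n + 1) + mM n lam) / ‖t‖ ^ 2 := by
        rw [div_div, ← pow_two]

lemma intTW : (∮ t in C(0, mR n lam), t * muntzW lam n t)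
    = 2 * Real.pi * Complex.I * ∑ k ∈ Finset.range (n + 1), (lam k + mb n lam k) := by
  have hM0 : (0:ℝ) ≤ mM n lam := Finset.sum_nonneg fun k _ => by positivity
  -- ∮ 1 = 0
  have hone : (∮ _t in C(0, mR n lam), (1:ℂ)) = 0 :=
    circleIntegral.integral_eq_zero_of_hasDerivWithinAt (mR_pos n lam).le
      (fun z _ => (hasDerivAt_id z).hasDerivWithinAt)
  have hcont : ∀ z ∈ sphere (0:ℂ) (mR n lam), ‖z‖ = mR n lam := by
    intro z hz
    exact mem_sphere_zero_iff_norm.mp hz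
  have hint1 : CircleIntegrable (fun t => t * muntzW lam n t) 0 (mR n lam) := by
    apply ContinuousOn.circleIntegrable (mR_pos n lam).le
    intro z hz
    exact (differentiableAt_id.mul (muntzW_diff n lam z
      (le_of_eq (hcont z hz).symm))).continuousAt.continuousWithinAt
  have hint2 : CircleIntegrable (fun _ : ℂ => (1:ℂ)) 0 (mR n lam) :=
    continuousOn_const.circleIntegrable (mR_pos n lam).le
  have hsplit := circleIntegral.integral_sub hint1 hint2
  have h := keyCircle (fun t => t * muntzW lam n t - 1)
    (∑ k ∈ Finset.range (n + 1), (lam k + mb n lam k))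
    (mR n lam) (max (mR n lam) (2 * mM n lam + 2))
    ((4 * mM n lam ^ 2 + 1) * 3 ^ (n + 1))
    (mR_pos n lam) (le_max_left _ _) ?_ ?_
  · rw [hsplit, hone, sub_zero] at h
    exact h
  · intro t ht
    exact (differentiableAt_id.mul (muntzW_diff n lam t ht)).sub_const 1
  · intro t ht
    have h2M : 2 * mM n lam + 2 ≤ ‖t‖ := le_trans (le_max_right _ _) ht
    have hpb := prodBound lam (mb n lam) (mM n lam) (Finset.range (n + 1)) le_rfl t h2M
    rw [Finset.card_range] at hpb
    calc ‖t * muntzW lam n t - 1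
        - (∑ k ∈ Finset.range (n + 1), (lam k + mb n lam k)) / t‖
        = ‖(∏ k ∈ Finset.range (n + 1), (t + mb n lam k) / (t - lam k)) - 1
          - (∑ k ∈ Finset.range (n + 1), (lam k + mb n lam k)) / t‖ := by
          rw [muntzW_prod]
      _ ≤ (4 * mM n lam ^ 2 + 1) * 3 ^ (n + 1) / ‖t‖ ^ 2 := hpb


lemma muntzW_contOnSphere : ContinuousOn (muntzW lam n) (sphere (0:ℂ) (mR n lam)) := by
  intro z hz
  have : ‖z‖ = mR n lam := by
    exact mem_sphere_zero_iff_norm.mp hz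
  exact (muntzW_diff n lam z this.ge).continuousAt.continuousWithinAt

lemma hasDeriv_main (x : ℝ) (hx0 : 0 < x) (hx1 : x ≤ 1) :
    HasDerivAt (fun y : ℝ => ∫ θ in (0:ℝ)..(2 * Real.pi),
        deriv (circleMap 0 (mR n lam)) θ •
          (muntzW lam n (circleMap 0 (mR n lam) θ) *
            Complex.exp (circleMap 0 (mR n lam) θ * Real.log y)))
      (∫ θ in (0:ℝ)..(2 * Real.pi),
        deriv (circleMap 0 (mR n lam)) θ •
          ((circleMap 0 (mR n lam) θ * muntzW lam n (circleMap 0 (mR n lam) θ)) *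
            (Complex.exp (circleMap 0 (mR n lam) θ * Real.log x) / (x:ℂ)))) x := by
  set R := mR n lam with hRdef
  have hR : 0 < R := mR_pos n lam
  -- continuity in θ
  have habs : ∀ θ : ℝ, ‖circleMap 0 R θ‖ = R := by
    intro θ; rw [norm_circleMap_zero, _root_.abs_of_nonneg hR.le]
  have hWc : Continuous fun θ : ℝ => muntzW lam n (circleMap 0 R θ) := by
    refine continuous_iff_continuousAt.mpr fun θ => ?_
    exact (muntzW_diff n lam _ (habs θ).ge).continuousAt.comp
      (continuous_circleMap 0 R).continuousAt
  have hdc : Continuous fun θ : ℝ => deriv (circleMap 0 R) θ := by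
    have : (fun θ : ℝ => deriv (circleMap 0 R) θ) = fun θ => circleMap 0 R θ * Complex.I :=
      funext fun θ => deriv_circleMap 0 R θ
    rw [this]
    exact (continuous_circleMap 0 R).mul continuous_const
  -- bound for W on the sphere
  obtain ⟨CW, hCW⟩ := (isCompact_sphere (0:ℂ) R).exists_bound_of_continuousOn
    (muntzW_contOnSphere n lam)
  have hCW0 : 0 ≤ CW :=
    le_trans (norm_nonneg _) (hCW _ (circleMap_mem_sphere (0:ℂ) hR.le 0))
  set L : ℝ := |Real.log (x / 2)| + 1 with hLdef
  have hL1 : 1 ≤ L := by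
    rw [hLdef]; linarith [abs_nonneg (Real.log (x / 2))]
  set B : ℝ := R * (R * CW * (Real.exp (R * L) * (2 / x))) with hBdef
  -- facts about y in the ball
  have hball : ∀ y : ℝ, y ∈ ball x (x / 2) → x / 2 < y ∧ y < 3 * x / 2 := by
    intro y hy
    rw [mem_ball, Real.dist_eq, abs_sub_lt_iff] at hy
    constructor <;> linarith [hy.1, hy.2]
  have hlogy : ∀ y : ℝ, y ∈ ball x (x / 2) → |Real.log y| ≤ L := by
    intro y hy
    obtain ⟨hy1, hy2⟩ := hball y hy
    have hy0 : 0 < y := by linarith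
    rw [abs_le]
    constructor
    · have h1 : Real.log (x / 2) ≤ Real.log y := Real.log_le_log (by linarith) hy1.le
      have h2 : -|Real.log (x / 2)| ≤ Real.log (x / 2) := neg_abs_le _
      simp only [hLdef]; linarith
    · have h1 : Real.log y ≤ y - 1 := Real.log_le_sub_one_of_pos hy0
      simp only [hLdef]
      have : |Real.log (x/2)| ≥ 0 := abs_nonneg _
      linarith
  -- derivative of integrand in y
  have h_diff : ∀ θ : ℝ, ∀ y ∈ ball x (x / 2),
      HasDerivAt (fun y : ℝ => deriv (circleMap 0 R) θ •
          (muntzW lam n (circleMap 0 R θ) *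
            Complex.exp (circleMap 0 R θ * Real.log y)))
        (deriv (circleMap 0 R) θ •
          ((circleMap 0 R θ * muntzW lam n (circleMap 0 R θ)) *
            (Complex.exp (circleMap 0 R θ * Real.log y) / (y:ℂ)))) y := by
    intro θ y hy
    have hy0 : 0 < y := by linarith [(hball y hy).1]
    have h1 : HasDerivAt Real.log y⁻¹ y := Real.hasDerivAt_log hy0.ne'
    have h2 : HasDerivAt (fun y : ℝ => ((Real.log y : ℝ) : ℂ)) ((y⁻¹ : ℝ) : ℂ) y :=
      h1.ofReal_comp
    have h3 := h2.const_mul (circleMap 0 R θ)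
    have h4 := h3.cexp
    have h5 := h4.const_mul (muntzW lam n (circleMap 0 R θ))
    have h6 : HasDerivAt (fun y : ℝ =>
      deriv (circleMap 0 R) θ • (muntzW lam n (circleMap 0 R θ) *
        Complex.exp (circleMap 0 R θ * Real.log y))) _ y := h5.const_smul (deriv (circleMap 0 R) θ)
    convert h6 using 1
    rw [smul_eq_mul, smul_eq_mul]
    have : ((y⁻¹ : ℝ) : ℂ) = ((y:ℂ))⁻¹ := by push_cast; ring
    rw [this]
    field_simp
  have key := intervalIntegral.hasDerivAt_integral_of_dominated_loc_of_deriv_le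
    (F := fun (y : ℝ) (θ : ℝ) => deriv (circleMap 0 R) θ •
        (muntzW lam n (circleMap 0 R θ) * Complex.exp (circleMap 0 R θ * Real.log y)))
    (F' := fun (y : ℝ) (θ : ℝ) => deriv (circleMap 0 R) θ •
        ((circleMap 0 R θ * muntzW lam n (circleMap 0 R θ)) *
          (Complex.exp (circleMap 0 R θ * Real.log y) / (y:ℂ))))
    (μ := MeasureTheory.volume)
    (x₀ := x) (a := (0:ℝ)) (b := 2 * Real.pi) (bound := fun _ => B) (s := ball x (x / 2))
    (ball_mem_nhds x (by positivity))
    (Filter.Eventually.of_forall fun y => (Continuous.aestronglyMeasurable (by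
      exact hdc.smul (hWc.mul (Complex.continuous_exp.comp
        ((continuous_circleMap 0 R).mul continuous_const))))))
    (Continuous.intervalIntegrable (by
      exact hdc.smul (hWc.mul (Complex.continuous_exp.comp
        ((continuous_circleMap 0 R).mul continuous_const)))) 0 (2 * Real.pi))
    (Continuous.aestronglyMeasurable (by
      exact hdc.smul (((continuous_circleMap 0 R).mul hWc).mul
        ((Complex.continuous_exp.comp
          ((continuous_circleMap 0 R).mul continuous_const)).div_const _))))
    (Filter.Eventually.of_forall fun θ _ => fun y hy => by
      obtain ⟨hy1, hy2⟩ := hball y hy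
      have hy0 : 0 < y := by linarith
      have hlog := hlogy y hy
      rw [norm_smul]
      have e1 : ‖deriv (circleMap 0 R) θ‖ = R := by
        rw [deriv_circleMap, norm_mul,
          Complex.norm_I, habs, mul_one]
      rw [e1, hBdef]
      have e2 : ‖circleMap 0 R θ * muntzW lam n (circleMap 0 R θ)‖ ≤ R * CW := by
        rw [norm_mul, habs]
        exact mul_le_mul_of_nonneg_left (hCW _ (circleMap_mem_sphere (0:ℂ) hR.le θ)) hR.le
      have e3 : ‖Complex.exp (circleMap 0 R θ * Real.log y) / (y:ℂ)‖
          ≤ Real.exp (R * L) * (2 / x) := by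
        rw [norm_div]
        have e4 : ‖Complex.exp (circleMap 0 R θ * Real.log y)‖ ≤ Real.exp (R * L) := by
          rw [Complex.norm_exp]
          apply Real.exp_le_exp.mpr
          calc (circleMap 0 R θ * (Real.log y : ℂ)).re
              ≤ ‖circleMap 0 R θ * (Real.log y : ℂ)‖ := Complex.re_le_norm _
            _ = R * |Real.log y| := by rw [norm_mul, habs, Complex.norm_real, Real.norm_eq_abs]
            _ ≤ R * L := mul_le_mul_of_nonneg_left hlog hR.le
        have e5 : (x / 2 : ℝ) ≤ ‖(y:ℂ)‖ := by
          rw [Complex.norm_real, Real.norm_eq_abs, _root_.abs_of_nonneg hy0.le]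
          linarith
        calc ‖Complex.exp (circleMap 0 R θ * Real.log y)‖ / ‖(y:ℂ)‖
            ≤ Real.exp (R * L) / (x / 2) :=
              div_le_div₀ (Real.exp_pos _).le e4 (by positivity) e5
          _ = Real.exp (R * L) * (2 / x) := by field_simp
      apply mul_le_mul_of_nonneg_left _ hR.le
      rw [norm_mul]
      exact mul_le_mul e2 e3 (norm_nonneg _) (by positivity))
    (intervalIntegrable_const)
    (Filter.Eventually.of_forall fun θ _ => fun y hy => h_diff θ y hy)
  exact key.2

lemma muntz_value_one : muntzLegendre lam n 1 = 1 := by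
  unfold muntzLegendre
  simp only [Real.log_one, Complex.ofReal_zero, mul_zero, Complex.exp_zero, mul_one]
  rw [show (1 + ∑ k ∈ Finset.range (n + 1), ‖lam k‖) = mR n lam from rfl]
  rw [intW n lam]
  exact inv_mul_cancel₀ Complex.two_pi_I_ne_zero

end Main

theorem muntzLegendre_value_and_deriv_at_one
    (n : ℕ) (lam : ℕ → ℂ) (hre : ∀ k ≤ n, (lam k).re > -(1/2)) :
    muntzLegendre lam n 1 = 1 ∧
    ∃ L' : ℝ → ℂ,
      (∀ x ∈ Set.Ioc (0:ℝ) 1,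
        HasDerivWithinAt (muntzLegendre lam n) (L' x) (Set.Ioc (0:ℝ) 1) x) ∧
      L' 1 = lam n + ∑ k ∈ Finset.range n, (lam k + (starRingEnd ℂ) (lam k) + 1) := by
  refine ⟨muntz_value_one n lam, fun x => (2 * Real.pi * Complex.I)⁻¹ *
      ∮ t in C(0, mR n lam),
        (t * muntzW lam n t) * (Complex.exp (t * Real.log x) / (x:ℂ)), ?_, ?_⟩
  · intro x hx
    obtain ⟨hx0, hx1⟩ := hx
    have h := (hasDeriv_main n lam x hx0 hx1).const_mul ((2 * (Real.pi:ℂ) * Complex.I)⁻¹)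
    exact h.hasDerivWithinAt
  · simp only [Real.log_one, Complex.ofReal_zero, mul_zero, Complex.exp_zero,
      Complex.ofReal_one, div_one, mul_one]
    rw [intTW n lam, ← mul_assoc, inv_mul_cancel₀ Complex.two_pi_I_ne_zero, one_mul,
      mc_eq n lam]
end

section
/- Let z_0, …, z_n be pairwise distinct real numbers and h_0, …, h_n, l_0, …, l_n be real numbers with Σ_{j=0}^n (h_j² + l_j²) > 0 (i.e., not all zero). Then the function w : ℝ → ℝ defined by w(y) = Σ_{j=0}^n ( h_j e^{z_j y} + l_j · y · e^{z_j (y − 1)} ) has at most 2n+1 real zeros; that is, the set {y ∈ ℝ : w(y) = 0} has cardinality at most 2n+1. -/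
open Polynomial Set

noncomputable def Dstep (c : ℝ) (p : ℝ[X]) : ℝ[X] := derivative p + C c * p

lemma hasDerivAt_term (p : ℝ[X]) (c y : ℝ) :
    HasDerivAt (fun t => p.eval t * Real.exp (c * t))
      ((Dstep c p).eval y * Real.exp (c * y)) y := by
  have h1 : HasDerivAt (fun t : ℝ => p.eval t) (p.derivative.eval y) y := p.hasDerivAt y
  have h2 : HasDerivAt (fun t : ℝ => Real.exp (c * t)) (Real.exp (c * y) * (c * 1)) y :=
    ((hasDerivAt_id y).const_mul c).exp
  have := h1.mul h2
  refine this.congr_deriv ?_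
  simp [Dstep]
  ring

lemma Dstep_ne_and_deg {c : ℝ} (hc : c ≠ 0) {p : ℝ[X]} (hp : p ≠ 0) :
    Dstep c p ≠ 0 ∧ (Dstep c p).natDegree = p.natDegree := by
  set n := p.natDegree with hn
  have hco : (Dstep c p).coeff n = c * p.coeff n := by
    simp [Dstep, coeff_derivative, Polynomial.coeff_eq_zero_of_natDegree_lt
      (lt_of_le_of_lt (le_refl p.natDegree) (Nat.lt_succ_self _))]
    exact Or.inl (Polynomial.coeff_eq_zero_of_natDegree_lt (by omega))
  have hcne : (Dstep c p).coeff n ≠ 0 := by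
    rw [hco]
    exact mul_ne_zero hc (by simpa [hn] using Polynomial.leadingCoeff_ne_zero.mpr hp)
  have hne : Dstep c p ≠ 0 := fun h => hcne (by simp [h])
  refine ⟨hne, le_antisymm ?_ (Polynomial.le_natDegree_of_ne_zero hcne)⟩
  apply Polynomial.natDegree_add_le_of_degree_le
  · exact le_trans (Polynomial.natDegree_derivative_le p) (Nat.sub_le _ _)
  · exact le_trans (Polynomial.natDegree_C_mul_le _ _) le_rfl

lemma Dstep_iter_ne_and_deg {c : ℝ} (hc : c ≠ 0) {p : ℝ[X]} (hp : p ≠ 0) (k : ℕ) :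
    (Dstep c)^[k] p ≠ 0 ∧ ((Dstep c)^[k] p).natDegree = p.natDegree := by
  induction k with
  | zero => simp [hp]
  | succ k ih =>
    rw [Function.iterate_succ_apply']
    obtain ⟨h1, h2⟩ := Dstep_ne_and_deg hc ih.1
    exact ⟨h1, h2.trans ih.2⟩

lemma Dstep_zero_iter (p : ℝ[X]) : (Dstep 0)^[p.natDegree + 1] p = 0 := by
  have : Dstep 0 = fun q : ℝ[X] => derivative q := by
    funext q; simp [Dstep]
  rw [this]
  exact Polynomial.iterate_derivative_eq_zero (Nat.lt_succ_self _)

lemma rolle_encard {f f' : ℝ → ℝ} (hf : ∀ x, HasDerivAt f (f' x) x) :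
    {y | f y = 0}.encard ≤ {y | f' y = 0}.encard + 1 := by
  by_contra hcon
  push_neg at hcon
  have hfin : {y | f' y = 0}.encard ≠ ⊤ := by
    intro h
    rw [h] at hcon
    simp at hcon
  obtain ⟨m, hm⟩ : ∃ m : ℕ, {y | f' y = 0}.encard = (m : ℕ∞) :=
    Option.ne_none_iff_exists'.mp hfin
  rw [hm] at hcon
  have h2 : ((m + 2 : ℕ) : ℕ∞) ≤ {y | f y = 0}.encard := by
    have h5 := Order.add_one_le_of_lt hcon
    refine le_trans (le_of_eq ?_) h5
    push_cast
    ring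
  obtain ⟨t, hts, htc⟩ := Set.exists_subset_encard_eq h2
  have htfin : t.Finite := Set.finite_of_encard_eq_coe htc
  have hcard : htfin.toFinset.card = m + 2 := by
    have h3 := htfin.encard_eq_coe_toFinset_card
    rw [htc] at h3
    exact_mod_cast h3.symm
  set e := htfin.toFinset.orderIsoOfFin hcard with he
  have hx : ∀ i : Fin (m + 2), f (e i : ℝ) = 0 := by
    intro i
    have h4 : (e i : ℝ) ∈ t := by
      have := (e i).2
      rw [Set.Finite.mem_toFinset] at this
      exact this
    exact hts h4
  have hmono : StrictMono (fun i : Fin (m + 2) => (e i : ℝ)) :=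
    fun i j hij => e.strictMono hij
  have hroll : ∀ i : Fin (m + 1),
      ∃ x, x ∈ Set.Ioo ((e i.castSucc : ℝ)) ((e i.succ : ℝ)) ∧ f' x = 0 := by
    intro i
    have hab : (e i.castSucc : ℝ) < (e i.succ : ℝ) := hmono (Fin.castSucc_lt_succ (i := i))
    obtain ⟨x, hx1, hx2⟩ := exists_hasDerivAt_eq_zero hab
      (fun u _ => (hf u).continuousAt.continuousWithinAt)
      (by rw [hx, hx]) (fun u _ => hf u)
    exact ⟨x, hx1, hx2⟩
  choose c hc1 hc2 using hroll
  have hcs : StrictMono c := by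
    intro i j hij
    calc c i < (e i.succ : ℝ) := (hc1 i).2
      _ ≤ (e j.castSucc : ℝ) := by
          apply hmono.monotone
          rw [Fin.le_def]
          simp only [Fin.val_succ, Fin.coe_castSucc]
          exact hij
      _ < c j := (hc1 j).1
  have hsub : ↑(Finset.image c Finset.univ) ⊆ {y | f' y = 0} := by
    intro x hx'
    simp only [Finset.coe_image, Finset.coe_univ, Set.image_univ, Set.mem_range] at hx'
    obtain ⟨i, rfl⟩ := hx'
    exact hc2 i
  have hle := Set.encard_le_encard hsub
  rw [Set.encard_coe_eq_coe_finsetCard,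
    Finset.card_image_of_injective _ hcs.injective, Finset.card_univ, Fintype.card_fin,
    hm] at hle
  have : m + 1 ≤ m := by exact_mod_cast hle
  omega


lemma rolle_iter {F : ℕ → ℝ → ℝ} (h : ∀ m y, HasDerivAt (F m) (F (m + 1) y) y) (k : ℕ) :
    {y | F 0 y = 0}.encard ≤ {y | F k y = 0}.encard + k := by
  induction k generalizing F with
  | zero => simp
  | succ k ih =>
    have h1 := rolle_encard (f := F 0) (f' := F 1) (fun x => h 0 x)
    have h2 := ih (F := fun m => F (m + 1)) (fun m y => h (m + 1) y)
    calc {y | F 0 y = 0}.encard ≤ {y | F 1 y = 0}.encard + 1 := h1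
      _ ≤ ({y | F (k + 1) y = 0}.encard + k) + 1 := add_le_add_left h2 1
      _ = {y | F (k + 1) y = 0}.encard + (k + 1) := by ring

lemma key {ι : Type} [DecidableEq ι] :
    ∀ (W : ℕ) (s : Finset ι) (z : ι → ℝ) (P : ι → ℝ[X]),
      Set.InjOn z s → s.Nonempty → (∀ j ∈ s, P j ≠ 0) →
      (∑ j ∈ s, ((P j).natDegree + 1)) = W →
      {y : ℝ | ∑ j ∈ s, (P j).eval y * Real.exp (z j * y) = 0}.encard + 1 ≤ (W : ℕ∞) := by
  intro W
  induction W using Nat.strong_induction_on with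
  | _ W IH =>
  intro s z P hinj hne hP hW
  obtain ⟨j0, hj0⟩ := hne
  set k := (P j0).natDegree + 1 with hk
  set w : ι → ℝ := fun j => z j - z j0 with hw
  set Q : ℕ → ι → ℝ[X] := fun m j => (Dstep (w j))^[m] (P j) with hQ
  set F : ℕ → ℝ → ℝ := fun m y => ∑ j ∈ s, (Q m j).eval y * Real.exp (w j * y) with hF
  have hder : ∀ m y, HasDerivAt (F m) (F (m + 1) y) y := by
    intro m y
    have hterms : ∀ j ∈ s, HasDerivAt (fun t => (Q m j).eval t * Real.exp (w j * t))
        ((Q (m + 1) j).eval y * Real.exp (w j * y)) y := by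
      intro j _
      have := hasDerivAt_term (Q m j) (w j) y
      simpa [hQ, Function.iterate_succ_apply'] using this
    simpa [hF] using HasDerivAt.fun_sum hterms
  have hset : {y : ℝ | ∑ j ∈ s, (P j).eval y * Real.exp (z j * y) = 0} = {y | F 0 y = 0} := by
    ext y
    simp only [Set.mem_setOf_eq]
    have hFy : F 0 y
        = (∑ j ∈ s, (P j).eval y * Real.exp (z j * y)) * Real.exp (-(z j0 * y)) := by
      simp only [hF, hQ, Function.iterate_zero, id_eq]
      rw [Finset.sum_mul]
      refine Finset.sum_congr rfl fun j _ => ?_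
      rw [mul_assoc, ← Real.exp_add]
      congr 2
      simp only [hw]
      ring
    rw [hFy, mul_eq_zero]
    simp [Real.exp_ne_zero]
  have hFk : ∀ y, F k y = ∑ j ∈ s.erase j0, (Q k j).eval y * Real.exp (w j * y) := by
    intro y
    have hw0 : w j0 = 0 := by simp [hw]
    have hQ0 : Q k j0 = 0 := by
      simp only [hQ, hw0, hk]
      exact Dstep_zero_iter (P j0)
    simp only [hF]
    rw [← Finset.add_sum_erase s _ hj0, hQ0]
    simp
  rcases Finset.eq_empty_or_nonempty (s.erase j0) with hemp | hne'
  · have hs : s = {j0} := by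
      rcases (Finset.erase_eq_empty_iff s j0).mp hemp with h1 | h1
      · exact absurd (h1 ▸ hj0) (by simp)
      · exact h1
    rw [hs] at hW
    simp only [Finset.sum_singleton] at hW
    have hset2 : {y : ℝ | ∑ j ∈ s, (P j).eval y * Real.exp (z j * y) = 0}
        = ↑((P j0).roots.toFinset) := by
      ext y
      rw [hs]
      simp only [Finset.sum_singleton, Set.mem_setOf_eq, Finset.coe_sort_coe, Finset.mem_coe,
        Multiset.mem_toFinset, Polynomial.mem_roots', Polynomial.IsRoot.def, mul_eq_zero,
        Real.exp_ne_zero, or_false]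
      exact ⟨fun h' => ⟨hP j0 hj0, h'⟩, fun h' => h'.2⟩
    rw [hset2, Set.encard_coe_eq_coe_finsetCard]
    have hle : (P j0).roots.toFinset.card ≤ (P j0).natDegree :=
      le_trans (Multiset.toFinset_card_le _) (Polynomial.card_roots' _)
    rw [← hW]
    exact_mod_cast Nat.succ_le_succ hle
  · set W' : ℕ := ∑ j ∈ s.erase j0, ((Q k j).natDegree + 1) with hW'
    have hwne : ∀ j ∈ s.erase j0, w j ≠ 0 := by
      intro j hj
      have hjs : j ∈ s := Finset.mem_of_mem_erase hj
      have hjj : j ≠ j0 := Finset.ne_of_mem_erase hj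
      simp only [hw, sub_ne_zero]
      exact fun hzz => hjj (hinj hjs hj0 hzz)
    have hQne : ∀ j ∈ s.erase j0, Q k j ≠ 0 := fun j hj =>
      (Dstep_iter_ne_and_deg (hwne j hj) (hP j (Finset.mem_of_mem_erase hj)) k).1
    have hQdeg : ∀ j ∈ s.erase j0, (Q k j).natDegree = (P j).natDegree := fun j hj =>
      (Dstep_iter_ne_and_deg (hwne j hj) (hP j (Finset.mem_of_mem_erase hj)) k).2
    have hWW : W' + k = W := by
      rw [hW', ← hW, ← Finset.add_sum_erase s _ hj0]
      rw [Finset.sum_congr rfl (fun j hj => by rw [hQdeg j hj])]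
      omega
    have hW'lt : W' < W := by omega
    have hinj' : Set.InjOn w (s.erase j0) := by
      intro a ha b hb hab
      have hzz : z a = z b := by
        have : z a - z j0 = z b - z j0 := hab
        linarith
      exact hinj (Finset.mem_of_mem_erase ha) (Finset.mem_of_mem_erase hb) hzz
    have hIH := IH W' hW'lt (s.erase j0) w (Q k) hinj' hne' hQne rfl
    have hkset : {y : ℝ | F k y = 0}
        = {y : ℝ | ∑ j ∈ s.erase j0, (Q k j).eval y * Real.exp (w j * y) = 0} := by
      ext y
      rw [Set.mem_setOf_eq, Set.mem_setOf_eq, hFk]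
    have hrolle := rolle_iter hder k
    rw [hset]
    calc {y | F 0 y = 0}.encard + 1
        ≤ ({y | F k y = 0}.encard + k) + 1 := add_le_add_left hrolle 1
      _ = ({y | F k y = 0}.encard + 1) + k := by ring
      _ ≤ (W' : ℕ∞) + k := by rw [hkset]; exact add_le_add_left hIH k
      _ = (W : ℕ∞) := by rw [← hWW]; push_cast; ring

theorem exponential_combination_zeros_bound
    (n : ℕ) (z h l : Fin (n + 1) → ℝ) (hz : Function.Injective z)
    (hnontriv : 0 < ∑ j, (h j ^ 2 + l j ^ 2)) :
    Set.encard {y : ℝ |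
        (∑ j, (h j * Real.exp (z j * y) + l j * y * Real.exp (z j * (y - 1)))) = 0}
      ≤ 2 * n + 1 := by
  classical
  set P : Fin (n + 1) → ℝ[X] := fun j => C (h j) + C (l j * Real.exp (-(z j))) * X with hP
  set s : Finset (Fin (n + 1)) := Finset.univ.filter (fun j => P j ≠ 0) with hs
  have hterm : ∀ (j : Fin (n + 1)) (y : ℝ),
      h j * Real.exp (z j * y) + l j * y * Real.exp (z j * (y - 1))
        = (P j).eval y * Real.exp (z j * y) := by
    intro j y
    simp only [hP, Polynomial.eval_add, Polynomial.eval_mul, Polynomial.eval_C,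
      Polynomial.eval_X]
    have he : Real.exp (z j * (y - 1)) = Real.exp (-(z j)) * Real.exp (z j * y) := by
      rw [← Real.exp_add]; ring_nf
    rw [he]; ring
  have hsetEq : {y : ℝ |
        (∑ j, (h j * Real.exp (z j * y) + l j * y * Real.exp (z j * (y - 1)))) = 0}
      = {y : ℝ | ∑ j ∈ s, (P j).eval y * Real.exp (z j * y) = 0} := by
    ext y
    simp only [Set.mem_setOf_eq]
    rw [Finset.sum_congr rfl (fun j _ => hterm j y)]
    rw [Finset.sum_filter_of_ne]
    intro j _ hne0 hPj
    exact hne0 (by rw [hPj]; simp)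
  have hne : s.Nonempty := by
    by_contra hemp
    rw [Finset.not_nonempty_iff_eq_empty] at hemp
    have hall : ∀ j, P j = 0 := by
      intro j
      by_contra hj
      have hmem : j ∈ s := by rw [hs]; simp [hj]
      rw [hemp] at hmem
      simp at hmem
    have hzero : ∀ j : Fin (n + 1), h j = 0 ∧ l j = 0 := by
      intro j
      have h0 := hall j
      rw [hP] at h0
      have hc0 := congrArg (fun q => Polynomial.coeff q 0) h0
      have hc1 := congrArg (fun q => Polynomial.coeff q 1) h0
      simp [Real.exp_ne_zero] at hc0 hc1
      exact ⟨hc0, hc1⟩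
    have hzsum : ∑ j, (h j ^ 2 + l j ^ 2) = 0 := by
      apply Finset.sum_eq_zero
      intro j _
      rw [(hzero j).1, (hzero j).2]
      ring
    rw [hzsum] at hnontriv
    exact lt_irrefl 0 hnontriv
  have hPne : ∀ j ∈ s, P j ≠ 0 := by
    intro j hj
    rw [hs] at hj
    simpa using (Finset.mem_filter.mp hj).2
  have hdeg : ∀ j, (P j).natDegree ≤ 1 := by
    intro j
    simp only [hP]
    refine le_trans (Polynomial.natDegree_add_le _ _) ?_
    refine max_le (by simp) (le_trans (Polynomial.natDegree_C_mul_le _ _) (by simp))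
  have hWle : (∑ j ∈ s, ((P j).natDegree + 1)) ≤ 2 * n + 2 := by
    calc ∑ j ∈ s, ((P j).natDegree + 1) ≤ ∑ _j ∈ s, 2 :=
          Finset.sum_le_sum (fun j _ => by have := hdeg j; omega)
      _ = 2 * s.card := by rw [Finset.sum_const]; ring
      _ ≤ 2 * (n + 1) := by
          have hcu := Finset.card_le_univ s
          simp only [Finset.card_univ, Fintype.card_fin] at hcu
          omega
      _ = 2 * n + 2 := by ring
  have hkey := key _ s z P hz.injOn hne hPne rfl
  rw [hsetEq]
  have h2 : {y : ℝ | ∑ j ∈ s, (P j).eval y * Real.exp (z j * y) = 0}.encard + 1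
      ≤ ((2 * n + 2 : ℕ) : ℕ∞) := le_trans hkey (by exact_mod_cast hWle)
  rw [← ENat.add_le_add_iff_right (k := 1) (by simp)]
  refine le_trans h2 (le_of_eq ?_)
  push_cast
  ring
end

section
/- Let β > −1, let x_0, …, x_N be points in (0,1) and w_0, …, w_N be strictly positive weights such that the quadrature rule Q[g] = Σ_{k=0}^{N} g(x_k) w_k satisfies Q[g] = ∫_0^1 g(x) x^β dx for every function g of the form g(x) = x^p and g(x) = x^p log x with integer 0 ≤ p ≤ N. Then for all functions u, v ∈ C^{N+1}([0,1]) and f(x) = u(x) + v(x) log x, the quadrature error satisfies |∫_0^1 f(x) x^β dx − Σ_{k=0}^{N} f(x_k) w_k| ≤ (1/N!) · ( (1/(1+β)) · ‖u^{(N+1)}‖_∞ + (1/(1+β)²) · ‖v^{(N+1)}‖_∞ ), where ‖·‖_∞ denotes the supremum norm on [0,1] and u^{(N+1)} is the (N+1)-st derivative. -/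
open Set MeasureTheory Real Filter


lemma taylor_sharp {f : ℝ → ℝ} {C x : ℝ} {n : ℕ}
    (hf : ContDiffOn ℝ (n + 1) f (Set.Icc 0 1)) (hx : x ∈ Set.Icc (0:ℝ) 1)
    (hC : ∀ y ∈ Set.Icc (0:ℝ) 1, |iteratedDerivWithin (n + 1) f (Set.Icc 0 1) y| ≤ C) :
    |f x - taylorWithinEval f n (Set.Icc 0 1) 0 x|
      ≤ C * x ^ (n + 1) / (n + 1).factorial := by
  have hC0 : 0 ≤ C := le_trans (abs_nonneg _) (hC 0 (by norm_num))
  rcases eq_or_lt_of_le hx.1 with rfl | hx0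
  · simp [taylorWithinEval_self]
  -- x > 0
  have h01 : (0:ℝ) < 1 := one_pos
  have hf' : DifferentiableOn ℝ (iteratedDerivWithin n f (Set.Icc 0 1)) (Set.Icc 0 1) :=
    hf.differentiableOn_iteratedDerivWithin (by exact_mod_cast Nat.lt_succ_self n)
      (uniqueDiffOn_Icc h01)
  set g : ℝ → ℝ := fun t => taylorWithinEval f n (Set.Icc 0 1) t x
      - taylorWithinEval f n (Set.Icc 0 1) 0 x with hg
  set B : ℝ → ℝ := fun t => C * (x ^ (n+1) - (x - t) ^ (n+1)) / (n+1).factorial with hBdef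
  have hgc : ContinuousOn g (Set.Icc 0 x) := by
    apply ContinuousOn.sub _ continuousOn_const
    exact (continuousOn_taylorWithinEval (uniqueDiffOn_Icc h01) hf.of_succ).mono
      (Set.Icc_subset_Icc_right hx.2)
  have hderiv : ∀ t ∈ Set.Ico 0 x, HasDerivWithinAt g
      ((((n).factorial : ℝ)⁻¹ * (x - t) ^ n) • iteratedDerivWithin (n + 1) f (Set.Icc 0 1) t)
      (Set.Ici t) t := by
    intro t ht
    have ht1 : t ∈ Set.Icc (0:ℝ) 1 := ⟨ht.1, le_trans ht.2.le hx.2⟩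
    have h := (hasDerivWithinAt_taylorWithinEval_at_Icc x h01 ht1 hf.of_succ hf').sub_const
      (taylorWithinEval f n (Set.Icc 0 1) 0 x)
    refine h.mono_of_mem_nhdsWithin ?_
    exact Icc_mem_nhdsGE_of_mem ⟨ht.1, lt_of_lt_of_le ht.2 hx.2⟩
  have hB : ∀ t : ℝ, HasDerivAt B (C * (x - t) ^ n / (n).factorial) t := by
    intro t
    have h1 : HasDerivAt (fun t : ℝ => x - t) (-1) t := by
      simpa using (hasDerivAt_id t).const_sub x
    have h2 : HasDerivAt (fun t : ℝ => (x - t) ^ (n+1))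
        (-((n+1) * (x - t) ^ n)) t := by
      have := (h1.fun_pow (n+1))
      simpa [mul_comm, mul_assoc, mul_left_comm] using this
    have h3 : HasDerivAt (fun t : ℝ => C * (x ^ (n+1) - (x - t) ^ (n+1)))
        (C * ((n+1) * (x - t) ^ n)) t := by
      simpa using ((hasDerivAt_const t (x ^ (n+1))).sub h2).const_mul C
    have h4 := h3.div_const ((n+1).factorial : ℝ)
    refine h4.congr_deriv ?_
    rw [Nat.factorial_succ]
    push_cast
    field_simp
  have hbound : ∀ t ∈ Set.Ico 0 x,
      ‖(((n).factorial : ℝ)⁻¹ * (x - t) ^ n) • iteratedDerivWithin (n + 1) f (Set.Icc 0 1) t‖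
        ≤ C * (x - t) ^ n / (n).factorial := by
    intro t ht
    have ht1 : t ∈ Set.Icc (0:ℝ) 1 := ⟨ht.1, le_trans ht.2.le hx.2⟩
    rw [norm_smul, Real.norm_eq_abs, Real.norm_eq_abs]
    have hxt : (0:ℝ) ≤ x - t := sub_nonneg.2 ht.2.le
    rw [abs_mul, abs_inv, abs_pow, abs_of_nonneg hxt, Nat.abs_cast]
    rw [div_eq_mul_inv]
    calc ((n).factorial : ℝ)⁻¹ * (x - t) ^ n * |iteratedDerivWithin (n + 1) f (Set.Icc 0 1) t|
        ≤ ((n).factorial : ℝ)⁻¹ * (x - t) ^ n * C := by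
          apply mul_le_mul_of_nonneg_left (hC t ht1)
          positivity
      _ = C * (x - t) ^ n * ((n).factorial : ℝ)⁻¹ := by ring
  have hga : ‖g 0‖ ≤ B 0 := by simp [hg, hBdef]
  have := image_norm_le_of_norm_deriv_right_le_deriv_boundary hgc hderiv hga hB hbound
    (right_mem_Icc.2 hx.1)
  rw [hg] at this
  simp only [taylorWithinEval_self] at this
  rw [Real.norm_eq_abs] at this
  calc |f x - taylorWithinEval f n (Set.Icc 0 1) 0 x| ≤ B x := this
    _ = C * x ^ (n+1) / (n+1).factorial := by simp [hBdef]

lemma approx_poly (N : ℕ) (f : ℝ → ℝ) (hf : ContDiffOn ℝ (N + 1) f (Set.Icc 0 1))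
    (M : ℝ) (hM : ∀ y ∈ Set.Icc (0:ℝ) 1, |iteratedDerivWithin (N + 1) f (Set.Icc 0 1) y| ≤ M) :
    ∃ c : ℕ → ℝ, ∀ t ∈ Set.Icc (0:ℝ) 1,
      |f t - ∑ i ∈ Finset.range (N + 1), c i * t ^ i| ≤ M / (2 * N.factorial) := by
  have hM0 : 0 ≤ M := le_trans (abs_nonneg _) (hM 0 (by norm_num))
  match N with
  | 0 =>
    refine ⟨fun _ => f (1/2), fun t ht => ?_⟩
    have hsum : ∑ i ∈ Finset.range (0 + 1), f (1/2) * t ^ i = f (1/2) := by simp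
    rw [hsum]
    have hdiff : DifferentiableOn ℝ f (Set.Icc 0 1) :=
      hf.differentiableOn (by simp)
    have hd : ∀ y ∈ Set.Icc (0:ℝ) 1, ‖derivWithin f (Set.Icc 0 1) y‖ ≤ M := by
      intro y hy
      rw [Real.norm_eq_abs, ← iteratedDerivWithin_one]
      exact hM y hy
    have := Convex.norm_image_sub_le_of_norm_derivWithin_le hdiff hd (convex_Icc 0 1)
      (by norm_num : (1/2 : ℝ) ∈ Set.Icc (0:ℝ) 1) ht
    rw [Real.norm_eq_abs, Real.norm_eq_abs] at this
    have h2 : |t - 1/2| ≤ 1/2 := by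
      rw [abs_le]; constructor <;> [linarith [ht.1]; linarith [ht.2]]
    calc |f t - f (1/2)| ≤ M * |t - 1/2| := this
      _ ≤ M * (1/2) := by nlinarith
      _ = M / (2 * Nat.factorial 0) := by rw [Nat.factorial_zero]; push_cast; ring
  | (n+1) =>
    refine ⟨fun i => ((i.factorial : ℝ))⁻¹ * iteratedDerivWithin i f (Set.Icc 0 1) 0,
      fun t ht => ?_⟩
    have heq : ∑ i ∈ Finset.range (n + 1 + 1),
        (((i.factorial : ℝ))⁻¹ * iteratedDerivWithin i f (Set.Icc 0 1) 0) * t ^ i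
        = taylorWithinEval f (n+1) (Set.Icc 0 1) 0 t := by
      rw [taylor_within_apply]
      refine Finset.sum_congr rfl fun i _ => ?_
      rw [smul_eq_mul, sub_zero]
      ring
    rw [heq]
    have := taylor_sharp hf ht hM
    have h1 : M * t ^ (n + 1 + 1) / (n + 1 + 1).factorial ≤ M / (2 * (n+1).factorial) := by
      rw [div_le_div_iff₀ (by positivity) (by positivity)]
      have htp : t ^ (n + 1 + 1) ≤ 1 :=
        pow_le_one₀ ht.1 ht.2
      have hfac : (2 * ((n+1).factorial : ℝ)) ≤ ((n + 1 + 1).factorial : ℝ) := by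
        rw [Nat.factorial_succ (n+1)]
        push_cast
        have : (2:ℝ) ≤ (n:ℝ) + 1 + 1 := by
          have : (0:ℝ) ≤ n := Nat.cast_nonneg n
          linarith
        have hfp : (0:ℝ) < ((n+1).factorial : ℝ) := by exact_mod_cast Nat.factorial_pos (n+1)
        nlinarith
      calc M * t ^ (n + 1 + 1) * (2 * ((n+1).factorial : ℝ))
          ≤ M * 1 * ((n + 1 + 1).factorial : ℝ) := by
            apply mul_le_mul
            · nlinarith
            · exact hfac
            · positivity
            · nlinarith
        _ = M * ((n + 1 + 1).factorial : ℝ) := by ring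
    exact le_trans this h1


variable {β : ℝ}

lemma intInt_rpow (hβ : β > -1) : IntegrableOn (fun t => t ^ β) (Set.Ioo (0:ℝ) 1) volume :=
  ((intervalIntegral.intervalIntegrable_rpow' hβ).1).mono_set Set.Ioo_subset_Ioc_self

lemma int_rpow_Ioo (hβ : β > -1) : ∫ t in Set.Ioo (0:ℝ) 1, t ^ β = 1 / (1 + β) := by
  rw [← integral_Ioc_eq_integral_Ioo, ← intervalIntegral.integral_of_le zero_le_one,
    integral_rpow (Or.inl hβ)]
  rw [Real.zero_rpow (by linarith), Real.one_rpow]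
  rw [add_comm]
  norm_num

lemma log_rpow_bound (hβ : β > -1) {t : ℝ} (ht : t ∈ Set.Ioo (0:ℝ) 1) :
    ‖Real.log t * t ^ β‖ ≤ (2 / (β + 1)) * t ^ ((β - 1)/2) := by
  set δ : ℝ := (β + 1) / 2 with hδ
  have hδ0 : 0 < δ := by rw [hδ]; linarith
  have ht0 : 0 < t := ht.1
  have hlt : -Real.log t ≤ t ^ (-δ) / δ := by
    have h1 : Real.log (t ^ (-δ)) ≤ t ^ (-δ) - 1 := Real.log_le_sub_one_of_pos (by positivity)
    rw [Real.log_rpow ht0] at h1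
    have h2 : (0:ℝ) < t ^ (-δ) := by positivity
    rw [le_div_iff₀ hδ0]
    nlinarith
  have hlog0 : Real.log t ≤ 0 := Real.log_nonpos ht0.le ht.2.le
  rw [Real.norm_eq_abs, abs_mul, abs_of_nonpos hlog0, abs_of_nonneg (Real.rpow_nonneg ht0.le β)]
  have h3 : -Real.log t * t ^ β ≤ (t ^ (-δ) / δ) * t ^ β :=
    mul_le_mul_of_nonneg_right hlt (Real.rpow_nonneg ht0.le β)
  have h4 : (t ^ (-δ) / δ) * t ^ β = (1/δ) * t ^ ((β - 1)/2) := by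
    rw [div_mul_eq_mul_div, ← Real.rpow_add ht0,
      show -δ + β = (β - 1)/2 by rw [hδ]; ring]
    ring
  rw [h4] at h3
  calc -Real.log t * t ^ β ≤ (1/δ) * t ^ ((β - 1)/2) := h3
    _ = (2 / (β + 1)) * t ^ ((β - 1)/2) := by rw [hδ]; congr 1; field_simp

lemma intOn_log_rpow_Ioc (hβ : β > -1) :
    IntegrableOn (fun t => Real.log t * t ^ β) (Set.Ioc (0:ℝ) 1) volume := by
  have hmaj : IntegrableOn (fun t => (2 / (β + 1)) * t ^ ((β - 1)/2)) (Set.Ioc (0:ℝ) 1) volume :=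
    ((intervalIntegral.intervalIntegrable_rpow' (by linarith : (-1:ℝ) < (β-1)/2)).1).const_mul _
  refine hmaj.mono' ?_ ?_
  · refine ContinuousOn.aestronglyMeasurable ?_ measurableSet_Ioc
    apply ContinuousOn.mul
    · exact Real.continuousOn_log.mono (fun t ht => by simp; exact ne_of_gt ht.1)
    · intro t ht
      exact (Real.continuousAt_rpow_const t β (Or.inl (ne_of_gt ht.1))).continuousWithinAt
  · rw [ae_restrict_iff' measurableSet_Ioc]
    refine Filter.Eventually.of_forall fun t ht => ?_
    rcases eq_or_lt_of_le ht.2 with rfl | h1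
    · have h5 : (0:ℝ) < β + 1 := by linarith
      simp [Real.log_one]
      positivity
    · exact log_rpow_bound hβ ⟨ht.1, h1⟩

lemma intOn_log_rpow (hβ : β > -1) :
    IntegrableOn (fun t => Real.log t * t ^ β) (Set.Ioo (0:ℝ) 1) volume :=
  (intOn_log_rpow_Ioc hβ).mono_set Set.Ioo_subset_Ioc_self

lemma int_log_rpow_Ioo (hβ : β > -1) :
    ∫ t in Set.Ioo (0:ℝ) 1, Real.log t * t ^ β = -(1 / (1 + β) ^ 2) := by
  have hb1 : β + 1 ≠ 0 := by linarith
  have hb0 : (0:ℝ) < β + 1 := by linarith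
  set F : ℝ → ℝ := fun t => t ^ (β+1) * Real.log t / (β+1) - t ^ (β+1) / (β+1)^2 with hFdef
  have hF : ∀ t ∈ Set.Ioo (0:ℝ) 1, HasDerivAt F (Real.log t * t ^ β) t := by
    intro t ht
    have ht0 : 0 < t := ht.1
    have h1 : HasDerivAt (fun s : ℝ => s ^ (β+1)) ((β+1) * t ^ β) t := by
      have := Real.hasDerivAt_rpow_const (p := β+1) (Or.inl ht0.ne')
      simpa [show β + 1 - 1 = β by ring] using this
    have h2 : HasDerivAt Real.log t⁻¹ t := Real.hasDerivAt_log ht0.ne'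
    have h3 : HasDerivAt (fun s => s ^ (β+1) * Real.log s)
        ((β+1) * t ^ β * Real.log t + t ^ (β+1) * t⁻¹) t := h1.mul h2
    have h4 := (h3.div_const (β+1)).sub (h1.div_const ((β+1)^2))
    refine h4.congr_deriv ?_
    rw [Real.rpow_add_one ht0.ne']
    field_simp
    ring
  have hii : IntervalIntegrable (fun t => Real.log t * t ^ β) volume 0 1 := by
    rw [intervalIntegrable_iff_integrableOn_Ioc_of_le zero_le_one]
    exact intOn_log_rpow_Ioc hβ
  have hT0 : Filter.Tendsto F (nhdsWithin 0 (Set.Ioi 0)) (nhds 0) := by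
    have T1 : Filter.Tendsto (fun t : ℝ => t ^ (β+1) * Real.log t / (β+1))
        (nhdsWithin 0 (Set.Ioi 0)) (nhds 0) := by
      have h := (tendsto_log_mul_rpow_nhdsGT_zero hb0).div_const (β+1)
      simp only [zero_div] at h
      refine h.congr fun t => by ring
    have T2 : Filter.Tendsto (fun t : ℝ => t ^ (β+1) / (β+1)^2)
        (nhdsWithin 0 (Set.Ioi 0)) (nhds 0) := by
      have hc : ContinuousAt (fun s : ℝ => s ^ (β+1)) 0 :=
        Real.continuousAt_rpow_const 0 (β+1) (Or.inr hb0.le)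
      have h6 : Filter.Tendsto (fun s : ℝ => s ^ (β+1)) (nhdsWithin 0 (Set.Ioi 0)) (nhds (0 ^ (β+1))) :=
        hc.tendsto.mono_left nhdsWithin_le_nhds
      have := h6.div_const ((β+1)^2)
      simpa [Real.zero_rpow hb1] using this
    have := T1.sub T2
    simpa using this
  have hT1 : Filter.Tendsto F (nhdsWithin 1 (Set.Iio 1)) (nhds (-(1 / (1 + β) ^ 2))) := by
    have hc : ContinuousAt F 1 := by
      apply ContinuousAt.sub
      · exact (((Real.continuousAt_rpow_const 1 (β+1) (Or.inl one_ne_zero)).mul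
          (Real.continuousAt_log one_ne_zero)).div_const (β+1))
      · exact (Real.continuousAt_rpow_const 1 (β+1) (Or.inl one_ne_zero)).div_const ((β+1)^2)
    have h7 : Filter.Tendsto F (nhdsWithin 1 (Set.Iio 1)) (nhds (F 1)) :=
      hc.tendsto.mono_left nhdsWithin_le_nhds
    have hF1 : F 1 = -(1 / (1 + β) ^ 2) := by
      simp [hFdef, Real.log_one, Real.one_rpow]
      rw [add_comm]
    rwa [hF1] at h7
  have key := intervalIntegral.integral_eq_sub_of_hasDerivAt_of_tendsto one_pos hF hii hT0 hT1
  rw [← integral_Ioc_eq_integral_Ioo, ← intervalIntegral.integral_of_le zero_le_one, key]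
  ring

lemma piece_bound {n : ℕ} (g P σ : ℝ → ℝ) (ξ s : Fin n → ℝ)
    (hξ : ∀ k, ξ k ∈ Set.Icc (0:ℝ) 1) {ε B : ℝ}
    (hε : ∀ t ∈ Set.Icc (0:ℝ) 1, |g t - P t| ≤ ε)
    (hgσ : IntegrableOn (fun t => g t * σ t) (Set.Ioo 0 1) volume)
    (hPσ : IntegrableOn (fun t => P t * σ t) (Set.Ioo 0 1) volume)
    (hσ : IntegrableOn σ (Set.Ioo 0 1) volume)
    (hB1 : ∫ t in Set.Ioo (0:ℝ) 1, |σ t| ≤ B)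
    (hB2 : ∑ k, |s k| ≤ B)
    (hex : ∫ t in Set.Ioo (0:ℝ) 1, P t * σ t = ∑ k, P (ξ k) * s k) :
    |(∫ t in Set.Ioo (0:ℝ) 1, g t * σ t) - ∑ k, g (ξ k) * s k| ≤ 2 * ε * B := by
  have hε0 : 0 ≤ ε := le_trans (abs_nonneg _) (hε 0 ⟨le_rfl, zero_le_one⟩)
  have h0 : IntegrableOn (fun t => (g t - P t) * σ t) (Set.Ioo 0 1) volume := by
    have := hgσ.sub hPσ
    simpa [sub_mul, Pi.sub_def] using this
  have hi : ∫ t in Set.Ioo (0:ℝ) 1, (g t - P t) * σ t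
      = (∫ t in Set.Ioo (0:ℝ) 1, g t * σ t) - ∫ t in Set.Ioo (0:ℝ) 1, P t * σ t := by
    rw [← integral_sub hgσ hPσ]
    exact setIntegral_congr_fun measurableSet_Ioo fun t _ => by ring
  have hs : ∑ k, (g (ξ k) - P (ξ k)) * s k
      = (∑ k, g (ξ k) * s k) - ∑ k, P (ξ k) * s k := by
    rw [← Finset.sum_sub_distrib]
    exact Finset.sum_congr rfl fun k _ => by ring
  have hsplit : (∫ t in Set.Ioo (0:ℝ) 1, g t * σ t) - ∑ k, g (ξ k) * s k
      = (∫ t in Set.Ioo (0:ℝ) 1, (g t - P t) * σ t) - ∑ k, (g (ξ k) - P (ξ k)) * s k := by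
    rw [hi, hs, hex]; ring
  rw [hsplit]
  have hIbound : |∫ t in Set.Ioo (0:ℝ) 1, (g t - P t) * σ t| ≤ ε * B := by
    calc |∫ t in Set.Ioo (0:ℝ) 1, (g t - P t) * σ t|
        ≤ ∫ t in Set.Ioo (0:ℝ) 1, |(g t - P t) * σ t| := by
          simpa only [Real.norm_eq_abs] using
            norm_integral_le_integral_norm (μ := volume.restrict (Set.Ioo (0:ℝ) 1))
              (fun t => (g t - P t) * σ t)
      _ ≤ ∫ t in Set.Ioo (0:ℝ) 1, ε * |σ t| := by
          refine setIntegral_mono_on h0.abs (hσ.abs.const_mul ε) measurableSet_Ioo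
            fun t ht => ?_
          rw [abs_mul]
          exact mul_le_mul_of_nonneg_right
            (hε t ⟨ht.1.le, ht.2.le⟩) (abs_nonneg _)
      _ = ε * ∫ t in Set.Ioo (0:ℝ) 1, |σ t| := integral_const_mul ε _
      _ ≤ ε * B := mul_le_mul_of_nonneg_left hB1 hε0
  have hSbound : |∑ k, (g (ξ k) - P (ξ k)) * s k| ≤ ε * B := by
    calc |∑ k, (g (ξ k) - P (ξ k)) * s k|
        ≤ ∑ k, |(g (ξ k) - P (ξ k)) * s k| := Finset.abs_sum_le_sum_abs _ _
      _ ≤ ∑ k, ε * |s k| := by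
          refine Finset.sum_le_sum fun k _ => ?_
          rw [abs_mul]
          exact mul_le_mul_of_nonneg_right (hε (ξ k) (hξ k)) (abs_nonneg _)
      _ = ε * ∑ k, |s k| := by rw [Finset.mul_sum]
      _ ≤ ε * B := mul_le_mul_of_nonneg_left hB2 hε0
  calc |(∫ t in Set.Ioo (0:ℝ) 1, (g t - P t) * σ t) - ∑ k, (g (ξ k) - P (ξ k)) * s k|
      ≤ |∫ t in Set.Ioo (0:ℝ) 1, (g t - P t) * σ t| + |∑ k, (g (ξ k) - P (ξ k)) * s k| :=
        abs_sub _ _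
    _ ≤ ε * B + ε * B := add_le_add hIbound hSbound
    _ = 2 * ε * B := by ring


theorem gauss_quadrature_log_error_bound
    (N : ℕ) (β : ℝ) (hβ : β > -1)
    (x w : Fin (N + 1) → ℝ)
    (hx : ∀ k, x k ∈ Set.Ioo (0:ℝ) 1) (hw : ∀ k, 0 < w k)
    (hexact_pow : ∀ p : ℕ, p ≤ N →
      ∑ k, x k ^ p * w k = ∫ t in Set.Ioo (0:ℝ) 1, t ^ p * t ^ β)
    (hexact_log : ∀ p : ℕ, p ≤ N →
      ∑ k, x k ^ p * Real.log (x k) * w k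
        = ∫ t in Set.Ioo (0:ℝ) 1, t ^ p * Real.log t * t ^ β)
    (u v : ℝ → ℝ)
    (hu : ContDiffOn ℝ (N + 1) u (Set.Icc 0 1))
    (hv : ContDiffOn ℝ (N + 1) v (Set.Icc 0 1)) :
    |(∫ t in Set.Ioo (0:ℝ) 1, (u t + v t * Real.log t) * t ^ β)
        - ∑ k, (u (x k) + v (x k) * Real.log (x k)) * w k|
      ≤ (1 / (N.factorial : ℝ)) *
        ((1 / (1 + β)) *
            (⨆ t : Set.Icc (0:ℝ) 1,
              |iteratedDerivWithin (N + 1) u (Set.Icc (0:ℝ) 1) t|) +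
          (1 / (1 + β) ^ 2) *
            (⨆ t : Set.Icc (0:ℝ) 1,
              |iteratedDerivWithin (N + 1) v (Set.Icc (0:ℝ) 1) t|)) := by
  have hb0 : (0:ℝ) < 1 + β := by linarith
  have hxI : ∀ k, x k ∈ Set.Icc (0:ℝ) 1 := fun k => ⟨(hx k).1.le, (hx k).2.le⟩
  -- continuity of weights
  have hcont_rpow : ContinuousOn (fun t : ℝ => t ^ β) (Set.Ioo 0 1) := fun t ht =>
    (Real.continuousAt_rpow_const t β (Or.inl (ne_of_gt ht.1))).continuousWithinAt
  have hcont_log : ContinuousOn Real.log (Set.Ioo (0:ℝ) 1) :=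
    Real.continuousOn_log.mono (fun t ht => Set.mem_compl_singleton_iff.2 (ne_of_gt ht.1))
  -- integrability of g * weight for continuous g
  have hint1 : ∀ g : ℝ → ℝ, ContinuousOn g (Set.Icc 0 1) →
      IntegrableOn (fun t => g t * t ^ β) (Set.Ioo 0 1) volume := by
    intro g hg
    obtain ⟨K, hK⟩ := isCompact_Icc.exists_bound_of_continuousOn hg
    refine ((intInt_rpow hβ).const_mul K).mono' ?_ ?_
    · exact ((hg.mono Set.Ioo_subset_Icc_self).mul hcont_rpow).aestronglyMeasurable
        measurableSet_Ioo
    · rw [ae_restrict_iff' measurableSet_Ioo]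
      refine Filter.Eventually.of_forall fun t ht => ?_
      have h1 : 0 ≤ t ^ β := Real.rpow_nonneg ht.1.le β
      rw [Real.norm_eq_abs, abs_mul, abs_of_nonneg h1]
      exact mul_le_mul_of_nonneg_right (hK t ⟨ht.1.le, ht.2.le⟩) h1
  have hint2 : ∀ g : ℝ → ℝ, ContinuousOn g (Set.Icc 0 1) →
      IntegrableOn (fun t => g t * (Real.log t * t ^ β)) (Set.Ioo 0 1) volume := by
    intro g hg
    obtain ⟨K, hK⟩ := isCompact_Icc.exists_bound_of_continuousOn hg
    refine (((intOn_log_rpow hβ).abs).const_mul K).mono' ?_ ?_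
    · exact ((hg.mono Set.Ioo_subset_Icc_self).mul
        (hcont_log.mul hcont_rpow)).aestronglyMeasurable measurableSet_Ioo
    · rw [ae_restrict_iff' measurableSet_Ioo]
      refine Filter.Eventually.of_forall fun t ht => ?_
      rw [Real.norm_eq_abs, abs_mul]
      exact mul_le_mul_of_nonneg_right (hK t ⟨ht.1.le, ht.2.le⟩) (abs_nonneg _)
  -- exactness on polynomials
  have hexactP : ∀ c : ℕ → ℝ,
      ∫ t in Set.Ioo (0:ℝ) 1, (∑ i ∈ Finset.range (N + 1), c i * t ^ i) * t ^ β
        = ∑ k, (∑ i ∈ Finset.range (N + 1), c i * (x k) ^ i) * w k := by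
    intro c
    have hterm : ∀ i, i ∈ Finset.range (N + 1) →
        IntegrableOn (fun t => c i * (t ^ i * t ^ β)) (Set.Ioo (0:ℝ) 1) volume := by
      intro i _
      have := hint1 (fun t => c i * t ^ i) (by fun_prop)
      simpa [mul_assoc] using this
    calc ∫ t in Set.Ioo (0:ℝ) 1, (∑ i ∈ Finset.range (N + 1), c i * t ^ i) * t ^ β
        = ∫ t in Set.Ioo (0:ℝ) 1, ∑ i ∈ Finset.range (N + 1), c i * (t ^ i * t ^ β) := by
          refine setIntegral_congr_fun measurableSet_Ioo fun t _ => ?_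
          rw [Finset.sum_mul]
          exact Finset.sum_congr rfl fun i _ => by ring
      _ = ∑ i ∈ Finset.range (N + 1), ∫ t in Set.Ioo (0:ℝ) 1, c i * (t ^ i * t ^ β) :=
          integral_finset_sum _ hterm
      _ = ∑ i ∈ Finset.range (N + 1), c i * ∑ k, x k ^ i * w k := by
          refine Finset.sum_congr rfl fun i hi => ?_
          rw [integral_const_mul, hexact_pow i (Nat.lt_succ_iff.1 (Finset.mem_range.1 hi))]
      _ = ∑ k, (∑ i ∈ Finset.range (N + 1), c i * (x k) ^ i) * w k := by
          simp_rw [Finset.mul_sum, Finset.sum_mul]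
          rw [Finset.sum_comm]
          exact Finset.sum_congr rfl fun k _ => Finset.sum_congr rfl fun i _ => by ring
  have hexactPlog : ∀ c : ℕ → ℝ,
      ∫ t in Set.Ioo (0:ℝ) 1,
          (∑ i ∈ Finset.range (N + 1), c i * t ^ i) * (Real.log t * t ^ β)
        = ∑ k, (∑ i ∈ Finset.range (N + 1), c i * (x k) ^ i) * (Real.log (x k) * w k) := by
    intro c
    have hterm : ∀ i, i ∈ Finset.range (N + 1) →
        IntegrableOn (fun t => c i * (t ^ i * (Real.log t * t ^ β)))
          (Set.Ioo (0:ℝ) 1) volume := by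
      intro i _
      have := hint2 (fun t => c i * t ^ i) (by fun_prop)
      simpa [mul_assoc] using this
    calc ∫ t in Set.Ioo (0:ℝ) 1,
          (∑ i ∈ Finset.range (N + 1), c i * t ^ i) * (Real.log t * t ^ β)
        = ∫ t in Set.Ioo (0:ℝ) 1,
            ∑ i ∈ Finset.range (N + 1), c i * (t ^ i * (Real.log t * t ^ β)) := by
          refine setIntegral_congr_fun measurableSet_Ioo fun t _ => ?_
          rw [Finset.sum_mul]
          exact Finset.sum_congr rfl fun i _ => by ring
      _ = ∑ i ∈ Finset.range (N + 1),
            ∫ t in Set.Ioo (0:ℝ) 1, c i * (t ^ i * (Real.log t * t ^ β)) :=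
          integral_finset_sum _ hterm
      _ = ∑ i ∈ Finset.range (N + 1), c i * ∑ k, x k ^ i * Real.log (x k) * w k := by
          refine Finset.sum_congr rfl fun i hi => ?_
          rw [integral_const_mul, hexact_log i (Nat.lt_succ_iff.1 (Finset.mem_range.1 hi))]
          congr 1
          refine setIntegral_congr_fun measurableSet_Ioo fun t _ => by ring
      _ = ∑ k, (∑ i ∈ Finset.range (N + 1), c i * (x k) ^ i) * (Real.log (x k) * w k) := by
          simp_rw [Finset.mul_sum, Finset.sum_mul]
          rw [Finset.sum_comm]
          exact Finset.sum_congr rfl fun k _ => Finset.sum_congr rfl fun i _ => by ring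
  -- sup norms
  set Mu := ⨆ t : Set.Icc (0:ℝ) 1, |iteratedDerivWithin (N + 1) u (Set.Icc (0:ℝ) 1) t| with hMu
  set Mv := ⨆ t : Set.Icc (0:ℝ) 1, |iteratedDerivWithin (N + 1) v (Set.Icc (0:ℝ) 1) t| with hMv
  have hDu : ContinuousOn (iteratedDerivWithin (N + 1) u (Set.Icc (0:ℝ) 1)) (Set.Icc 0 1) :=
    hu.continuousOn_iteratedDerivWithin (by exact_mod_cast le_rfl) (uniqueDiffOn_Icc one_pos)
  have hDv : ContinuousOn (iteratedDerivWithin (N + 1) v (Set.Icc (0:ℝ) 1)) (Set.Icc 0 1) :=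
    hv.continuousOn_iteratedDerivWithin (by exact_mod_cast le_rfl) (uniqueDiffOn_Icc one_pos)
  have hMu_b : ∀ y ∈ Set.Icc (0:ℝ) 1, |iteratedDerivWithin (N + 1) u (Set.Icc (0:ℝ) 1) y| ≤ Mu := by
    intro y hy
    have hbdd : BddAbove (Set.range fun t : Set.Icc (0:ℝ) 1 =>
        |iteratedDerivWithin (N + 1) u (Set.Icc (0:ℝ) 1) t|) := by
      have h := isCompact_Icc.bddAbove_image hDu.abs
      rwa [Set.image_eq_range] at h
    exact le_ciSup hbdd (⟨y, hy⟩ : Set.Icc (0:ℝ) 1)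
  have hMv_b : ∀ y ∈ Set.Icc (0:ℝ) 1, |iteratedDerivWithin (N + 1) v (Set.Icc (0:ℝ) 1) y| ≤ Mv := by
    intro y hy
    have hbdd : BddAbove (Set.range fun t : Set.Icc (0:ℝ) 1 =>
        |iteratedDerivWithin (N + 1) v (Set.Icc (0:ℝ) 1) t|) := by
      have h := isCompact_Icc.bddAbove_image hDv.abs
      rwa [Set.image_eq_range] at h
    exact le_ciSup hbdd (⟨y, hy⟩ : Set.Icc (0:ℝ) 1)
  -- polynomial approximations
  obtain ⟨cu, hcu⟩ := approx_poly N u hu Mu hMu_b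
  obtain ⟨cv, hcv⟩ := approx_poly N v hv Mv hMv_b
  set Pu : ℝ → ℝ := fun t => ∑ i ∈ Finset.range (N + 1), cu i * t ^ i with hPu
  set Pv : ℝ → ℝ := fun t => ∑ i ∈ Finset.range (N + 1), cv i * t ^ i with hPv
  have hPuc : ContinuousOn Pu (Set.Icc 0 1) := by fun_prop
  have hPvc : ContinuousOn Pv (Set.Icc 0 1) := by fun_prop
  -- B values
  have hB1u : ∫ t in Set.Ioo (0:ℝ) 1, |t ^ β| ≤ 1 / (1 + β) := by
    have : ∫ t in Set.Ioo (0:ℝ) 1, |t ^ β| = ∫ t in Set.Ioo (0:ℝ) 1, t ^ β :=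
      setIntegral_congr_fun measurableSet_Ioo fun t ht =>
        abs_of_nonneg (Real.rpow_nonneg ht.1.le β)
    rw [this, int_rpow_Ioo hβ]
  have hB2u : ∑ k, |w k| ≤ 1 / (1 + β) := by
    have h1 : ∑ k, |w k| = ∑ k, w k :=
      Finset.sum_congr rfl fun k _ => abs_of_pos (hw k)
    have h2 : ∑ k, w k = 1 / (1 + β) := by
      have := hexact_pow 0 (Nat.zero_le N)
      simp only [pow_zero, one_mul] at this
      rw [this, int_rpow_Ioo hβ]
    rw [h1, h2]
  have habslog : ∫ t in Set.Ioo (0:ℝ) 1, |Real.log t * t ^ β| = 1 / (1 + β) ^ 2 := by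
    have h1 : ∫ t in Set.Ioo (0:ℝ) 1, |Real.log t * t ^ β|
        = ∫ t in Set.Ioo (0:ℝ) 1, -(Real.log t * t ^ β) := by
      refine setIntegral_congr_fun measurableSet_Ioo fun t ht => ?_
      have hl : Real.log t ≤ 0 := Real.log_nonpos ht.1.le ht.2.le
      have hr : 0 ≤ t ^ β := Real.rpow_nonneg ht.1.le β
      rw [abs_of_nonpos (mul_nonpos_of_nonpos_of_nonneg hl hr)]
    rw [h1, integral_neg, int_log_rpow_Ioo hβ, neg_neg]
  have hB1v : ∫ t in Set.Ioo (0:ℝ) 1, |Real.log t * t ^ β| ≤ 1 / (1 + β) ^ 2 :=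
    le_of_eq habslog
  have hB2v : ∑ k, |Real.log (x k) * w k| ≤ 1 / (1 + β) ^ 2 := by
    have h1 : ∑ k, |Real.log (x k) * w k| = ∑ k, -(Real.log (x k) * w k) := by
      refine Finset.sum_congr rfl fun k _ => ?_
      have hl : Real.log (x k) ≤ 0 := Real.log_nonpos (hx k).1.le (hx k).2.le
      exact abs_of_nonpos (mul_nonpos_of_nonpos_of_nonneg hl (hw k).le)
    have h2 : ∑ k, Real.log (x k) * w k = -(1 / (1 + β) ^ 2) := by
      have := hexact_log 0 (Nat.zero_le N)
      simp only [pow_zero, one_mul] at this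
      have h3 : ∫ t in Set.Ioo (0:ℝ) 1, Real.log t * t ^ β = -(1 / (1 + β) ^ 2) :=
        int_log_rpow_Ioo hβ
      rw [this, h3]
    rw [h1, Finset.sum_neg_distrib, h2, neg_neg]
  -- the two pieces
  have hE1 := piece_bound u Pu (fun t => t ^ β) x w hxI hcu
    (hint1 u hu.continuousOn) (hint1 Pu hPuc) (intInt_rpow hβ) hB1u hB2u (hexactP cu)
  have hE2 := piece_bound v Pv (fun t => Real.log t * t ^ β) x (fun k => Real.log (x k) * w k)
    hxI hcv (hint2 v hv.continuousOn) (hint2 Pv hPvc) (intOn_log_rpow hβ) hB1v hB2v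
    (hexactPlog cv)
  -- split the full integral and sum
  have hsplitI : ∫ t in Set.Ioo (0:ℝ) 1, (u t + v t * Real.log t) * t ^ β
      = (∫ t in Set.Ioo (0:ℝ) 1, u t * t ^ β)
        + ∫ t in Set.Ioo (0:ℝ) 1, v t * (Real.log t * t ^ β) := by
    rw [← integral_add (hint1 u hu.continuousOn) (hint2 v hv.continuousOn)]
    exact setIntegral_congr_fun measurableSet_Ioo fun t _ => by ring
  have hsplitS : ∑ k, (u (x k) + v (x k) * Real.log (x k)) * w k
      = (∑ k, u (x k) * w k) + ∑ k, v (x k) * (Real.log (x k) * w k) := by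
    rw [← Finset.sum_add_distrib]
    exact Finset.sum_congr rfl fun k _ => by ring
  rw [hsplitI, hsplitS]
  have hfac : (0:ℝ) < (N.factorial : ℝ) := by exact_mod_cast N.factorial_pos
  have hre : ((∫ t in Set.Ioo (0:ℝ) 1, u t * t ^ β)
          + ∫ t in Set.Ioo (0:ℝ) 1, v t * (Real.log t * t ^ β))
        - ((∑ k, u (x k) * w k) + ∑ k, v (x k) * (Real.log (x k) * w k))
      = ((∫ t in Set.Ioo (0:ℝ) 1, u t * t ^ β) - ∑ k, u (x k) * w k)
        + ((∫ t in Set.Ioo (0:ℝ) 1, v t * (Real.log t * t ^ β))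
          - ∑ k, v (x k) * (Real.log (x k) * w k)) := by ring
  rw [hre]
  calc |((∫ t in Set.Ioo (0:ℝ) 1, u t * t ^ β) - ∑ k, u (x k) * w k)
        + ((∫ t in Set.Ioo (0:ℝ) 1, v t * (Real.log t * t ^ β))
          - ∑ k, v (x k) * (Real.log (x k) * w k))|
      ≤ |(∫ t in Set.Ioo (0:ℝ) 1, u t * t ^ β) - ∑ k, u (x k) * w k|
        + |(∫ t in Set.Ioo (0:ℝ) 1, v t * (Real.log t * t ^ β))
          - ∑ k, v (x k) * (Real.log (x k) * w k)| := abs_add_le _ _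
    _ ≤ 2 * (Mu / (2 * N.factorial)) * (1 / (1 + β))
        + 2 * (Mv / (2 * N.factorial)) * (1 / (1 + β) ^ 2) := add_le_add hE1 hE2
    _ = (1 / (N.factorial : ℝ)) * ((1 / (1 + β)) * Mu + (1 / (1 + β) ^ 2) * Mv) := by
        ring
end
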